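/- arXiv:math/0612650 — 3 statements merged into one kernel-verified Lean document; each statement's English description precedes it below -/
import Mathlib

section
/- Let Σ be a rational pointed fan in ℝ^d and K a field. For each cone C ∈ Σ, the quotient of the toric face ring K[Σ] by the ideal 𝔭_C = (x^a : a ∉ C) is isomorphic as a ℤ^d-graded K-algebra to the toric face ring K[fan(C)] of the fan of all faces of C. In particular 𝔭_C is a prime ideal of K[Σ]. -/
open scoped BigOperators Classical

noncomputable section

/-- The coercion of an integer point to a real point. -/
def Z2R {d : ℕ} (a : Fin d → ℤ) : Fin d → ℝ := fun i => (a i : ℝ)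

/-- The conical hull of a finite set of vectors. -/
def conicalHull {d : ℕ} (S : Finset (Fin d → ℝ)) : Set (Fin d → ℝ) :=
  {x | ∃ c : (Fin d → ℝ) → ℝ, (∀ v, 0 ≤ c v) ∧ x = ∑ v ∈ S, c v • v}

/-- A rational (polyhedral) cone: the conical hull of finitely many rational vectors. -/
def IsRatCone {d : ℕ} (C : Set (Fin d → ℝ)) : Prop :=
  ∃ S : Finset (Fin d → ℝ), (∀ v ∈ S, ∀ i, ∃ q : ℚ, v i = (q : ℝ)) ∧ C = conicalHull S

/-- A pointed cone contains no line. -/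
def IsPointedSet {d : ℕ} (C : Set (Fin d → ℝ)) : Prop :=
  ∀ x ∈ C, -x ∈ C → x = 0

/-- A rational pointed cone. -/
def IsRatPointedCone {d : ℕ} (C : Set (Fin d → ℝ)) : Prop :=
  IsRatCone C ∧ IsPointedSet C

/-- A convex cone (containing the origin). -/
def IsConvexCone {d : ℕ} (C : Set (Fin d → ℝ)) : Prop :=
  0 ∈ C ∧ (∀ x ∈ C, ∀ y ∈ C, x + y ∈ C) ∧ ∀ x ∈ C, ∀ t : ℝ, 0 ≤ t → t • x ∈ C

/-- `C'` is a face of the cone `C`. -/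
def IsFaceOf {d : ℕ} (C' C : Set (Fin d → ℝ)) : Prop :=
  IsConvexCone C' ∧ C' ⊆ C ∧ ∀ x ∈ C, ∀ y ∈ C, x + y ∈ C' → x ∈ C' ∧ y ∈ C'

/-- A rational pointed fan in `ℝ^d`. -/
structure Fan (d : ℕ) where
  cones : Set (Set (Fin d → ℝ))
  finite : cones.Finite
  pointed : ∀ C ∈ cones, IsRatPointedCone C
  faces_mem : ∀ C ∈ cones, ∀ C', IsFaceOf C' C → C' ∈ cones
  inter_face : ∀ C ∈ cones, ∀ C' ∈ cones, IsFaceOf (C ∩ C') C ∧ IsFaceOf (C ∩ C') C'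

/-- The dimension of a cone. -/
def coneDim {d : ℕ} (C : Set (Fin d → ℝ)) : ℕ :=
  Module.finrank ℝ (Submodule.span ℝ C)

/-- The dimension of a fan. -/
def Fan.dim {d : ℕ} (Φ : Fan d) : ℕ := sSup (coneDim '' Φ.cones)

/-- The set of lattice points in the support of a fan. -/
def Fan.supp {d : ℕ} (Φ : Fan d) : Set (Fin d → ℤ) :=
  {a | ∃ C ∈ Φ.cones, Z2R a ∈ C}

/-- The relative interior of a cone. -/
def relint {d : ℕ} (C : Set (Fin d → ℝ)) : Set (Fin d → ℝ) := intrinsicInterior ℝ C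

section ToricFaceRing

variable (K : Type) [Field K] {d : ℕ} (Φ : Fan d)

/-- The ambient polynomial ring: the monoid algebra of the free commutative
monoid on the lattice points of the support of the fan. -/
abbrev Fan.polyRing := AddMonoidAlgebra K (↥Φ.supp →₀ ℕ)

/-- The monomial of the ambient polynomial ring corresponding to a lattice point. -/
def Fan.X (m : ↥Φ.supp) : Φ.polyRing K :=
  AddMonoidAlgebra.single (Finsupp.single m 1) (1 : K)

/-- Auxiliary monomial: zero if the point is not in the support. -/
def Fan.Xaux (a : Fin d → ℤ) : Φ.polyRing K :=
  if h : a ∈ Φ.supp then Φ.X K ⟨a, h⟩ else 0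

/-- The defining relations of the toric face ring. -/
def Fan.relIdeal : Ideal (Φ.polyRing K) :=
  Ideal.span
    ({z | ∃ a b : ↥Φ.supp, (∃ C ∈ Φ.cones, Z2R a.1 ∈ C ∧ Z2R b.1 ∈ C) ∧
        z = Φ.X K a * Φ.X K b - Φ.Xaux K (a.1 + b.1)} ∪
     {z | ∃ a b : ↥Φ.supp, (¬ ∃ C ∈ Φ.cones, Z2R a.1 ∈ C ∧ Z2R b.1 ∈ C) ∧
        z = Φ.X K a * Φ.X K b} ∪
     {z | ∃ a : ↥Φ.supp, a.1 = 0 ∧ z = Φ.X K a - 1})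

/-- The toric face ring `K[Φ]` of a rational pointed fan `Φ`. -/
def ToricFaceRing := Φ.polyRing K ⧸ Φ.relIdeal K

instance : CommRing (ToricFaceRing K Φ) := Ideal.Quotient.commRing _
instance : Algebra K (ToricFaceRing K Φ) := Ideal.Quotient.algebra K

/-- The monomial `x^a` of the toric face ring. -/
def xpow (a : Fin d → ℤ) : ToricFaceRing K Φ :=
  Ideal.Quotient.mk (Φ.relIdeal K) (Φ.Xaux K a)

/-- A `ℤ^d`-graded (monomial) ideal of the toric face ring. -/
def IsMonomialIdeal (I : Ideal (ToricFaceRing K Φ)) : Prop :=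
  ∃ S : Set (Fin d → ℤ), I = Ideal.span (xpow K Φ '' S)

/-- The graded prime ideal `𝔭_C` associated to a cone. -/
def conePrime (C : Set (Fin d → ℝ)) : Ideal (ToricFaceRing K Φ) :=
  Ideal.span (xpow K Φ '' {a | Z2R a ∉ C})

/-- The graded radical ideal `𝔮_{Σ'}` associated to a collection of cones. -/
def subfanIdeal (T : Set (Set (Fin d → ℝ))) : Ideal (ToricFaceRing K Φ) :=
  Ideal.span (xpow K Φ '' {a | Z2R a ∉ ⋃₀ T})

/-- The graded maximal ideal of the toric face ring. -/
def gradedMaxIdeal : Ideal (ToricFaceRing K Φ) :=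
  Ideal.span (xpow K Φ '' {a | a ≠ 0})

end ToricFaceRing
lemma conicalHull_zero_mem {d : ℕ} (S : Finset (Fin d → ℝ)) : (0 : Fin d → ℝ) ∈ conicalHull S :=
  ⟨0, fun _ => le_refl 0, by simp⟩

lemma conicalHull_add_mem {d : ℕ} {S : Finset (Fin d → ℝ)} {x y : Fin d → ℝ}
    (hx : x ∈ conicalHull S) (hy : y ∈ conicalHull S) : x + y ∈ conicalHull S := by
  obtain ⟨c, hc, rfl⟩ := hx
  obtain ⟨c', hc', rfl⟩ := hy
  refine ⟨c + c', fun v => add_nonneg (hc v) (hc' v), ?_⟩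
  rw [← Finset.sum_add_distrib]
  refine Finset.sum_congr rfl fun v _ => ?_
  simp [add_smul]

lemma Z2R_add {d : ℕ} (a b : Fin d → ℤ) : Z2R (a + b) = Z2R a + Z2R b := by
  funext i; simp [Z2R]

lemma Z2R_zero {d : ℕ} : Z2R (0 : Fin d → ℤ) = 0 := by
  funext i; simp [Z2R]

/-- The affine monoid `C ∩ ℤ^d` of lattice points of a rational cone. -/
def coneMonoid {d : ℕ} (C : Set (Fin d → ℝ)) (h : IsRatCone C) : AddSubmonoid (Fin d → ℤ) where
  carrier := {a | Z2R a ∈ C}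
  zero_mem' := by
    obtain ⟨S, -, rfl⟩ := h
    show Z2R (0 : Fin d → ℤ) ∈ conicalHull S
    rw [Z2R_zero]
    exact conicalHull_zero_mem S
  add_mem' := by
    intro a b ha hb
    obtain ⟨S, -, rfl⟩ := h
    show Z2R (a + b) ∈ conicalHull S
    rw [Z2R_add]
    exact conicalHull_add_mem ha hb


section ProofAux

variable (K : Type) [Field K] {d : ℕ} (Φ : Fan d) (C : Set (Fin d → ℝ))

lemma cone_zero_mem {C : Set (Fin d → ℝ)} (h : IsRatCone C) : (0 : Fin d → ℝ) ∈ C := by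
  obtain ⟨S, -, rfl⟩ := h; exact conicalHull_zero_mem S

lemma cone_add_mem {C : Set (Fin d → ℝ)} (h : IsRatCone C) {x y : Fin d → ℝ}
    (hx : x ∈ C) (hy : y ∈ C) : x + y ∈ C := by
  obtain ⟨S, -, rfl⟩ := h; exact conicalHull_add_mem hx hy

/-- If `a, b` lie in a common cone `D` and `a + b ∈ C`, then `a, b ∈ C`. -/
lemma face_cancel (hC : C ∈ Φ.cones) {D : Set (Fin d → ℝ)} (hD : D ∈ Φ.cones) {x y : Fin d → ℝ}
    (hx : x ∈ D) (hy : y ∈ D) (hxy : x + y ∈ C) : x ∈ C ∧ y ∈ C := by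
  have hface := (Φ.inter_face C hC D hD).2
  have hxyD : x + y ∈ D := cone_add_mem (Φ.pointed D hD).1 hx hy
  have := hface.2.2 x hx y hy ⟨hxy, hxyD⟩
  exact ⟨this.1.1, this.2.1⟩

variable (hC : C ∈ Φ.cones)

/-- The target map on variables. -/
def tfrf : ↥Φ.supp → AddMonoidAlgebra K ↥(coneMonoid C (Φ.pointed C hC).1) := fun m =>
  if h : Z2R m.1 ∈ C then
    AddMonoidAlgebra.single (⟨m.1, h⟩ : ↥(coneMonoid C (Φ.pointed C hC).1)) (1 : K)
  else 0

/-- The map from the ambient polynomial ring to the affine monoid algebra of `C`. -/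
def tfrPhi : Φ.polyRing K →ₐ[K] AddMonoidAlgebra K ↥(coneMonoid C (Φ.pointed C hC).1) :=
  MvPolynomial.aeval (tfrf K Φ C hC)

lemma X_eq (m : ↥Φ.supp) : Φ.X K m = MvPolynomial.X (R := K) m := rfl

lemma tfrPhi_X (m : ↥Φ.supp) : tfrPhi K Φ C hC (Φ.X K m) = tfrf K Φ C hC m := by
  rw [X_eq]; exact MvPolynomial.aeval_X _ m

lemma tfrPhi_Xaux (a : Fin d → ℤ) :
    tfrPhi K Φ C hC (Φ.Xaux K a) =
      if h : Z2R a ∈ C then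
        AddMonoidAlgebra.single (⟨a, h⟩ : ↥(coneMonoid C (Φ.pointed C hC).1)) (1 : K)
      else 0 := by
  unfold Fan.Xaux
  by_cases h : Z2R a ∈ C
  · have hs : a ∈ Φ.supp := ⟨C, hC, h⟩
    rw [dif_pos hs, dif_pos h, tfrPhi_X]
    unfold tfrf
    rw [dif_pos h]
  · rw [dif_neg h]
    by_cases hs : a ∈ Φ.supp
    · rw [dif_pos hs, tfrPhi_X]; unfold tfrf; rw [dif_neg h]
    · rw [dif_neg hs, map_zero]

lemma relIdeal_le_ker : Φ.relIdeal K ≤ RingHom.ker (tfrPhi K Φ C hC) := by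
  rw [Fan.relIdeal, Ideal.span_le]
  rintro z ((hz | hz) | hz)
  · obtain ⟨a, b, ⟨D, hD, haD, hbD⟩, rfl⟩ := hz
    simp only [SetLike.mem_coe, RingHom.mem_ker, map_sub, map_mul, tfrPhi_X, tfrPhi_Xaux]
    unfold tfrf
    by_cases ha : Z2R a.1 ∈ C
    · by_cases hb : Z2R b.1 ∈ C
      · have hab : Z2R (a.1 + b.1) ∈ C := by
          rw [Z2R_add]; exact cone_add_mem (Φ.pointed C hC).1 ha hb
        rw [dif_pos ha, dif_pos hb, dif_pos hab, AddMonoidAlgebra.single_mul_single]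
        have he : (⟨a.1, ha⟩ + ⟨b.1, hb⟩ : ↥(coneMonoid C (Φ.pointed C hC).1))
            = ⟨a.1 + b.1, hab⟩ := rfl
        rw [he, one_mul, sub_self]
      · have hab : ¬ Z2R (a.1 + b.1) ∈ C := fun h =>
          hb (face_cancel Φ C hC hD haD hbD (by rwa [← Z2R_add])).2
        rw [dif_pos ha, dif_neg hb, dif_neg hab, mul_zero, sub_zero]
    · have hab : ¬ Z2R (a.1 + b.1) ∈ C := fun h =>
        ha (face_cancel Φ C hC hD haD hbD (by rwa [← Z2R_add])).1
      rw [dif_neg ha, dif_neg hab, zero_mul, sub_zero]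
  · obtain ⟨a, b, hnc, rfl⟩ := hz
    simp only [SetLike.mem_coe, RingHom.mem_ker, map_mul, tfrPhi_X]
    unfold tfrf
    by_cases ha : Z2R a.1 ∈ C
    · have hb : ¬ Z2R b.1 ∈ C := fun hb => hnc ⟨C, hC, ha, hb⟩
      rw [dif_neg hb, mul_zero]
    · rw [dif_neg ha, zero_mul]
  · obtain ⟨a, ha0, rfl⟩ := hz
    simp only [SetLike.mem_coe, RingHom.mem_ker, map_sub, map_one, tfrPhi_X]
    unfold tfrf
    have ha : Z2R a.1 ∈ C := by
      rw [ha0, Z2R_zero]; exact cone_zero_mem (Φ.pointed C hC).1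
    rw [dif_pos ha]
    have he : (⟨a.1, ha⟩ : ↥(coneMonoid C (Φ.pointed C hC).1)) = 0 := Subtype.ext ha0
    rw [he]
    exact sub_self _

/-- The map descended to the toric face ring. -/
def tfrPsi0 : ToricFaceRing K Φ →ₐ[K] AddMonoidAlgebra K ↥(coneMonoid C (Φ.pointed C hC).1) :=
  Ideal.Quotient.liftₐ (Φ.relIdeal K) (tfrPhi K Φ C hC)
    (fun a ha => relIdeal_le_ker K Φ C hC ha)

lemma tfrPsi0_mk (x : Φ.polyRing K) :
    tfrPsi0 K Φ C hC (Ideal.Quotient.mk (Φ.relIdeal K) x) = tfrPhi K Φ C hC x :=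
  Ideal.Quotient.liftₐ_apply _ _ _ _

lemma tfrPsi0_xpow (a : Fin d → ℤ) :
    tfrPsi0 K Φ C hC (xpow K Φ a) =
      if h : Z2R a ∈ C then
        AddMonoidAlgebra.single (⟨a, h⟩ : ↥(coneMonoid C (Φ.pointed C hC).1)) (1 : K)
      else 0 := by
  rw [xpow, tfrPsi0_mk, tfrPhi_Xaux]

lemma conePrime_le_ker :
    conePrime K Φ C ≤ RingHom.ker (tfrPsi0 K Φ C hC) := by
  rw [conePrime, Ideal.span_le]
  rintro z ⟨a, ha, rfl⟩
  simp only [SetLike.mem_coe, RingHom.mem_ker, tfrPsi0_xpow]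
  rw [dif_neg ha]

/-- The map descended to the quotient by the cone prime. -/
def tfrPsi : (ToricFaceRing K Φ ⧸ conePrime K Φ C) →ₐ[K]
    AddMonoidAlgebra K ↥(coneMonoid C (Φ.pointed C hC).1) :=
  Ideal.Quotient.liftₐ (conePrime K Φ C) (tfrPsi0 K Φ C hC)
    (fun a ha => conePrime_le_ker K Φ C hC ha)

lemma tfrPsi_mk (x : ToricFaceRing K Φ) :
    tfrPsi K Φ C hC (Ideal.Quotient.mk (conePrime K Φ C) x) = tfrPsi0 K Φ C hC x :=
  Ideal.Quotient.liftₐ_apply _ _ _ _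

lemma xpow_eq_mk_X {a : Fin d → ℤ} (ha : a ∈ Φ.supp) :
    xpow K Φ a = Ideal.Quotient.mk (Φ.relIdeal K) (Φ.X K ⟨a, ha⟩) := by
  rw [xpow, Fan.Xaux, dif_pos ha]

include hC in
lemma xpow_zero_eq_one : xpow K Φ (0 : Fin d → ℤ) = 1 := by
  have h0C : Z2R (0 : Fin d → ℤ) ∈ C := by
    rw [Z2R_zero]; exact cone_zero_mem (Φ.pointed C hC).1
  have h0 : (0 : Fin d → ℤ) ∈ Φ.supp := ⟨C, hC, h0C⟩
  have hmem : Φ.X K ⟨0, h0⟩ - 1 ∈ Φ.relIdeal K :=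
    Ideal.subset_span (Or.inr ⟨⟨0, h0⟩, rfl, rfl⟩)
  have h := Ideal.Quotient.eq_zero_iff_mem.mpr hmem
  rw [map_sub, map_one, sub_eq_zero] at h
  rw [xpow_eq_mk_X K Φ h0, h]; rfl

lemma xpow_add {D : Set (Fin d → ℝ)} (hD : D ∈ Φ.cones) {a b : Fin d → ℤ}
    (ha : Z2R a ∈ D) (hb : Z2R b ∈ D) :
    xpow K Φ (a + b) = xpow K Φ a * xpow K Φ b := by
  have has : a ∈ Φ.supp := ⟨D, hD, ha⟩
  have hbs : b ∈ Φ.supp := ⟨D, hD, hb⟩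
  have hmem : Φ.X K ⟨a, has⟩ * Φ.X K ⟨b, hbs⟩ - Φ.Xaux K (a + b) ∈ Φ.relIdeal K :=
    Ideal.subset_span (Or.inl (Or.inl ⟨⟨a, has⟩, ⟨b, hbs⟩, ⟨D, hD, ha, hb⟩, rfl⟩))
  have h := Ideal.Quotient.eq_zero_iff_mem.mpr hmem
  rw [map_sub, sub_eq_zero, map_mul] at h
  rw [xpow, ← h, xpow_eq_mk_X K Φ has, xpow_eq_mk_X K Φ hbs]; rfl

/-- The inverse map, on the monoid level. -/
def tfrF : Multiplicative ↥(coneMonoid C (Φ.pointed C hC).1) →*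
    (ToricFaceRing K Φ ⧸ conePrime K Φ C) where
  toFun m := Ideal.Quotient.mk (conePrime K Φ C) (xpow K Φ (Multiplicative.toAdd m).1)
  map_one' := by
    show Ideal.Quotient.mk (conePrime K Φ C) (xpow K Φ (0 : Fin d → ℤ)) = 1
    rw [xpow_zero_eq_one K Φ C hC, map_one]
  map_mul' x y := by
    show Ideal.Quotient.mk (conePrime K Φ C)
        (xpow K Φ ((Multiplicative.toAdd x).1 + (Multiplicative.toAdd y).1)) = _
    rw [xpow_add K Φ hC (Multiplicative.toAdd x).2 (Multiplicative.toAdd y).2, map_mul]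

/-- The inverse algebra map. -/
def tfrBack : AddMonoidAlgebra K ↥(coneMonoid C (Φ.pointed C hC).1) →ₐ[K]
    (ToricFaceRing K Φ ⧸ conePrime K Φ C) :=
  AddMonoidAlgebra.lift K _ _ (tfrF K Φ C hC)

lemma tfrBack_single (m : ↥(coneMonoid C (Φ.pointed C hC).1)) :
    tfrBack K Φ C hC (AddMonoidAlgebra.single m (1 : K)) =
      Ideal.Quotient.mk (conePrime K Φ C) (xpow K Φ m.1) := by
  rw [tfrBack, AddMonoidAlgebra.lift_single, one_smul]
  rfl

lemma psi_comp_back :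
    (tfrPsi K Φ C hC).comp (tfrBack K Φ C hC) = AlgHom.id K _ := by
  apply AddMonoidAlgebra.algHom_ext
  intro m
  rw [AlgHom.comp_apply, tfrBack_single, tfrPsi_mk, tfrPsi0_xpow, AlgHom.id_apply]
  rw [dif_pos (show Z2R (m : Fin d → ℤ) ∈ C from m.2)]
  exact Subsingleton.elim _ _

lemma back_comp_psi :
    (tfrBack K Φ C hC).comp (tfrPsi K Φ C hC) = AlgHom.id K _ := by
  apply Ideal.Quotient.algHom_ext
  apply Ideal.Quotient.algHom_ext
  apply MvPolynomial.algHom_ext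
  intro m
  show (tfrBack K Φ C hC) ((tfrPsi K Φ C hC) (Ideal.Quotient.mk (conePrime K Φ C)
      (Ideal.Quotient.mk (Φ.relIdeal K) (Φ.X K m) : ToricFaceRing K Φ))) =
    Ideal.Quotient.mk (conePrime K Φ C)
      (Ideal.Quotient.mk (Φ.relIdeal K) (Φ.X K m) : ToricFaceRing K Φ)
  erw [tfrPsi_mk, tfrPsi0_mk, tfrPhi_X]
  unfold tfrf
  by_cases h : Z2R m.1 ∈ C
  · rw [dif_pos h, tfrBack_single]
    rw [xpow_eq_mk_X K Φ m.2]
  · rw [dif_neg h, map_zero]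
    have hx : xpow K Φ m.1 ∈ conePrime K Φ C :=
      Ideal.subset_span ⟨m.1, h, rfl⟩
    have h0 := Ideal.Quotient.eq_zero_iff_mem.mpr hx
    rw [xpow_eq_mk_X K Φ m.2] at h0
    rw [h0]

end ProofAux

/-- For a cone `C` of a rational pointed fan `Φ`, the quotient of the toric
face ring `K[Φ]` by `𝔭_C = (x^a : a ∉ C)` is isomorphic, as a `ℤ^d`-graded `K`-algebra
(the isomorphism matches monomials of each degree), to the toric face ring
`K[fan(C)] = K[C ∩ ℤ^d]`; in particular `𝔭_C` is a prime ideal. -/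
theorem toricFaceRing_quotient_conePrime (K : Type) [Field K] {d : ℕ} (Φ : Fan d)
    (C : Set (Fin d → ℝ)) (hC : C ∈ Φ.cones) :
    (∃ e : (ToricFaceRing K Φ ⧸ conePrime K Φ C) ≃ₐ[K]
        AddMonoidAlgebra K ↥(coneMonoid C (Φ.pointed C hC).1),
      ∀ (a : Fin d → ℤ) (ha : Z2R a ∈ C),
        e (Ideal.Quotient.mk (conePrime K Φ C) (xpow K Φ a)) =
          AddMonoidAlgebra.single (⟨a, ha⟩ : ↥(coneMonoid C (Φ.pointed C hC).1)) (1 : K))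
    ∧ (conePrime K Φ C).IsPrime := by
  have huniq : UniqueSums ↥(coneMonoid C (Φ.pointed C hC).1) :=
    UniqueSums.of_injective_addHom (coneMonoid C (Φ.pointed C hC).1).subtype.toAddHom
      Subtype.val_injective inferInstance
  have hdom : IsDomain (AddMonoidAlgebra K ↥(coneMonoid C (Φ.pointed C hC).1)) :=
    NoZeroDivisors.to_isDomain _
  let e := AlgEquiv.ofAlgHom (tfrPsi K Φ C hC) (tfrBack K Φ C hC)
    (psi_comp_back K Φ C hC) (back_comp_psi K Φ C hC)
  constructor
  · refine ⟨e, fun a ha => ?_⟩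
    have he : ∀ x, e x = tfrPsi K Φ C hC x := fun x => rfl
    rw [he, tfrPsi_mk, tfrPsi0_xpow, dif_pos ha]
  · have hQ : IsDomain (ToricFaceRing K Φ ⧸ conePrime K Φ C) :=
      Function.Injective.isDomain e.toAlgHom.toRingHom e.injective
    exact (Ideal.Quotient.isDomain_iff_prime _).mp hQ
end
end

section
/- There exists a shellable rational pointed fan Σ in ℝ^2 whose toric face ring K[Σ] is not clean. Concretely, the fan Σ with facets C_1 = cone((0,1),(2,1)) and C_2 = cone((0,1),(−2,1)) is shellable, but K[Σ] is not clean, because there is no γ ∈ C_2 ∩ ℤ^2 (nor in C_1 ∩ ℤ^2, for the reversed order) satisfying ⋃_{D ∈ str_{fan(C_j)}(γ)} relint(D) ∩ ℤ^2 = γ + (C_j ∩ ℤ^2) together with str_{fan(C_j)}(γ) = fan(C_j) ∖ fan(C_{j'}) for the other facet C_{j'}. -/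
open scoped BigOperators Classical

noncomputable section

/-- A facet of a fan: a maximal cone. -/
def IsFacet {d : ℕ} (Φ : Fan d) (C : Set (Fin d → ℝ)) : Prop :=
  C ∈ Φ.cones ∧ ∀ D ∈ Φ.cones, C ⊆ D → D = C

/-- The set of faces of a cone `C` inside the fan `Φ`, i.e. the fan `fan(C)`. -/
def faceSet {d : ℕ} (Φ : Fan d) (C : Set (Fin d → ℝ)) : Set (Set (Fin d → ℝ)) :=
  {D ∈ Φ.cones | D ⊆ C}

/-- The set of proper faces of a cone `C` inside `Φ`, i.e. the fan `fan(∂C)`. -/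
def bdFaceSet {d : ℕ} (Φ : Fan d) (C : Set (Fin d → ℝ)) : Set (Set (Fin d → ℝ)) :=
  {D ∈ Φ.cones | D ⊆ C ∧ D ≠ C}

/-- Fuelled (by recursion depth) definition of a shelling of a fan. -/
def IsShellingAux {d : ℕ} : ℕ → Fan d → List (Set (Fin d → ℝ)) → Prop
  | 0, Φ, L => L.Nodup ∧ {C | C ∈ L} = {C | IsFacet Φ C} ∧ Fan.dim Φ = 0
  | n + 1, Φ, L => L.Nodup ∧ {C | C ∈ L} = {C | IsFacet Φ C} ∧
      (Fan.dim Φ = 0 ∨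
        ((∃ S1 : Fan d, S1.cones = bdFaceSet Φ (L.getD 0 ∅) ∧
            ∃ L1, IsShellingAux n S1 L1) ∧
         ∀ j, 0 < j → j < L.length →
           ∃ Sb : Fan d, Sb.cones = bdFaceSet Φ (L.getD j ∅) ∧
           ∃ D : List (Set (Fin d → ℝ)), IsShellingAux n Sb D ∧
           ∃ r, 1 ≤ r ∧ r ≤ D.length ∧
             (⋃ i ∈ Finset.range j,
                (faceSet Φ (L.getD i ∅) ∩ faceSet Φ (L.getD j ∅))) ≠ ∅ ∧
             (⋃ i ∈ Finset.range j,
                (faceSet Φ (L.getD i ∅) ∩ faceSet Φ (L.getD j ∅))) =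
               ⋃ l ∈ Finset.range r, faceSet Sb (D.getD l ∅)))

/-- A shelling of a fan. -/
def IsShelling {d : ℕ} (Φ : Fan d) (L : List (Set (Fin d → ℝ))) : Prop :=
  ∃ n, IsShellingAux n Φ L

/-- A fan is shellable if it has a shelling. -/
def IsShellable {d : ℕ} (Φ : Fan d) : Prop := ∃ L, IsShelling Φ L
/-- A commutative ring is clean if it admits a prime filtration whose set of prime
quotients is exactly the set of minimal primes. -/
def IsCleanRing (R : Type) [CommRing R] : Prop :=
  ∃ (n : ℕ) (M : Fin (n + 1) → Submodule R R) (P : Fin n → Ideal R),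
    M 0 = ⊥ ∧ M (Fin.last n) = ⊤ ∧ (∀ i : Fin n, M i.castSucc ≤ M i.succ) ∧
    (∀ i : Fin n,
      Nonempty ((↥(M i.succ) ⧸ Submodule.comap (M i.succ).subtype (M i.castSucc))
        ≃ₗ[R] (R ⧸ P i))) ∧
    {I : Ideal R | ∃ i, P i = I} = minimalPrimes R
/-! ## Part 1: concrete cones and membership characterizations -/

namespace S15

def C1 : Set (Fin 2 → ℝ) := conicalHull {![(0:ℝ),1], ![2,1]}
def C2 : Set (Fin 2 → ℝ) := conicalHull {![(0:ℝ),1], ![-2,1]}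
def R0 : Set (Fin 2 → ℝ) := conicalHull {![(0:ℝ),1]}
def Rp : Set (Fin 2 → ℝ) := conicalHull {![(2:ℝ),1]}
def Rm : Set (Fin 2 → ℝ) := conicalHull {![(-2:ℝ),1]}
def O : Set (Fin 2 → ℝ) := conicalHull (∅ : Finset (Fin 2 → ℝ))

lemma mem_conicalHull_pair {d : ℕ} {a b : Fin d → ℝ} (hab : a ≠ b) (x : Fin d → ℝ) :
    x ∈ conicalHull {a, b} ↔ ∃ s t : ℝ, 0 ≤ s ∧ 0 ≤ t ∧ x = s • a + t • b := by
  constructor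
  · rintro ⟨c, hc, rfl⟩
    rw [Finset.sum_pair hab]
    exact ⟨c a, c b, hc a, hc b, rfl⟩
  · rintro ⟨s, t, hs, ht, rfl⟩
    refine ⟨fun v => if v = a then s else if v = b then t else 0, ?_, ?_⟩
    · intro v; dsimp only; split_ifs <;> simp [hs, ht]
    · rw [Finset.sum_pair hab]
      simp [hab.symm]

lemma mem_conicalHull_single {d : ℕ} (a : Fin d → ℝ) (x : Fin d → ℝ) :
    x ∈ conicalHull {a} ↔ ∃ t : ℝ, 0 ≤ t ∧ x = t • a := by
  constructor
  · rintro ⟨c, hc, rfl⟩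
    rw [Finset.sum_singleton]
    exact ⟨c a, hc a, rfl⟩
  · rintro ⟨t, ht, rfl⟩
    exact ⟨fun v => if v = a then t else 0, fun v => by dsimp only; split_ifs <;> simp [ht],
      by rw [Finset.sum_singleton]; simp⟩

lemma conicalHull_empty {d : ℕ} : conicalHull (∅ : Finset (Fin d → ℝ)) = {0} := by
  ext x
  constructor
  · rintro ⟨c, hc, rfl⟩; simp
  · rintro rfl; exact ⟨fun _ => 0, fun _ => le_rfl, by simp⟩

lemma O_eq : O = {0} := conicalHull_empty

lemma ne01_21 : (![(0:ℝ),1]) ≠ ![2,1] := by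
  intro h; have := congrFun h 0; norm_num at this

lemma ne01_m21 : (![(0:ℝ),1]) ≠ ![-2,1] := by
  intro h; have := congrFun h 0; norm_num at this

lemma mem_C1 (x : Fin 2 → ℝ) : x ∈ C1 ↔ 0 ≤ x 0 ∧ x 0 ≤ 2 * x 1 := by
  rw [C1, mem_conicalHull_pair ne01_21]
  constructor
  · rintro ⟨s, t, hs, ht, rfl⟩
    constructor <;> · simp [Matrix.cons_val_zero, Matrix.cons_val_one]; nlinarith
  · rintro ⟨h0, h1⟩
    refine ⟨x 1 - x 0 / 2, x 0 / 2, by linarith, by linarith, ?_⟩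
    funext i
    fin_cases i <;> simp <;> ring

lemma mem_C2 (x : Fin 2 → ℝ) : x ∈ C2 ↔ x 0 ≤ 0 ∧ -x 0 ≤ 2 * x 1 := by
  rw [C2, mem_conicalHull_pair ne01_m21]
  constructor
  · rintro ⟨s, t, hs, ht, rfl⟩
    constructor <;> · simp [Matrix.cons_val_zero, Matrix.cons_val_one]; nlinarith
  · rintro ⟨h0, h1⟩
    refine ⟨x 1 + x 0 / 2, -(x 0 / 2), by linarith, by linarith, ?_⟩
    funext i
    fin_cases i <;> simp <;> ring

lemma mem_R0 (x : Fin 2 → ℝ) : x ∈ R0 ↔ x 0 = 0 ∧ 0 ≤ x 1 := by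
  rw [R0, mem_conicalHull_single]
  constructor
  · rintro ⟨t, ht, rfl⟩; simp [ht]
  · rintro ⟨h0, h1⟩
    refine ⟨x 1, h1, ?_⟩
    funext i; fin_cases i <;> simp [h0]

lemma mem_Rp (x : Fin 2 → ℝ) : x ∈ Rp ↔ x 0 = 2 * x 1 ∧ 0 ≤ x 1 := by
  rw [Rp, mem_conicalHull_single]
  constructor
  · rintro ⟨t, ht, rfl⟩; constructor <;> simp [ht] <;> ring
  · rintro ⟨h0, h1⟩
    refine ⟨x 1, h1, ?_⟩
    funext i; fin_cases i <;> simp [h0] <;> ring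

lemma mem_Rm (x : Fin 2 → ℝ) : x ∈ Rm ↔ x 0 = -(2 * x 1) ∧ 0 ≤ x 1 := by
  rw [Rm, mem_conicalHull_single]
  constructor
  · rintro ⟨t, ht, rfl⟩; constructor <;> simp [ht] <;> ring
  · rintro ⟨h0, h1⟩
    refine ⟨x 1, h1, ?_⟩
    funext i; fin_cases i <;> simp [h0] <;> ring

end S15
/-! ## Part 2: convexity, pointedness, faces -/

namespace S15

lemma eq_zero_iff (x : Fin 2 → ℝ) : x = 0 ↔ x 0 = 0 ∧ x 1 = 0 := by
  constructor
  · rintro rfl; simp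
  · rintro ⟨h0, h1⟩; funext i; fin_cases i <;> simpa

lemma isConvexCone_conicalHull {d : ℕ} (S : Finset (Fin d → ℝ)) :
    IsConvexCone (conicalHull S) := by
  refine ⟨⟨fun _ => 0, fun _ => le_rfl, by simp⟩, ?_, ?_⟩
  · rintro x ⟨c, hc, rfl⟩ y ⟨c', hc', rfl⟩
    refine ⟨fun v => c v + c' v, fun v => add_nonneg (hc v) (hc' v), ?_⟩
    rw [← Finset.sum_add_distrib]
    exact Finset.sum_congr rfl fun v _ => (add_smul _ _ _).symm
  · rintro x ⟨c, hc, rfl⟩ t ht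
    refine ⟨fun v => t * c v, fun v => mul_nonneg ht (hc v), ?_⟩
    rw [Finset.smul_sum]
    exact Finset.sum_congr rfl fun v _ => by dsimp only; rw [smul_smul]

lemma cc_C1 : IsConvexCone C1 := isConvexCone_conicalHull _
lemma cc_C2 : IsConvexCone C2 := isConvexCone_conicalHull _
lemma cc_R0 : IsConvexCone R0 := isConvexCone_conicalHull _
lemma cc_Rp : IsConvexCone Rp := isConvexCone_conicalHull _
lemma cc_Rm : IsConvexCone Rm := isConvexCone_conicalHull _
lemma cc_O : IsConvexCone O := isConvexCone_conicalHull _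

lemma ptd_C1 : IsPointedSet C1 := by
  intro x hx hx'
  rw [mem_C1] at hx
  rw [mem_C1] at hx'
  simp only [Pi.neg_apply] at hx'
  rw [eq_zero_iff]; constructor <;> linarith [hx.1, hx.2, hx'.1, hx'.2]

lemma ptd_C2 : IsPointedSet C2 := by
  intro x hx hx'
  rw [mem_C2] at hx
  rw [mem_C2] at hx'
  simp only [Pi.neg_apply] at hx'
  rw [eq_zero_iff]; constructor <;> linarith [hx.1, hx.2, hx'.1, hx'.2]

lemma ptd_R0 : IsPointedSet R0 := by
  intro x hx hx'
  rw [mem_R0] at hx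
  rw [mem_R0] at hx'
  simp only [Pi.neg_apply] at hx'
  rw [eq_zero_iff]; constructor <;> linarith [hx.1, hx.2, hx'.1, hx'.2]

lemma ptd_Rp : IsPointedSet Rp := by
  intro x hx hx'
  rw [mem_Rp] at hx
  rw [mem_Rp] at hx'
  simp only [Pi.neg_apply] at hx'
  rw [eq_zero_iff]; constructor <;> linarith [hx.1, hx.2, hx'.1, hx'.2]

lemma ptd_Rm : IsPointedSet Rm := by
  intro x hx hx'
  rw [mem_Rm] at hx
  rw [mem_Rm] at hx'
  simp only [Pi.neg_apply] at hx'
  rw [eq_zero_iff]; constructor <;> linarith [hx.1, hx.2, hx'.1, hx'.2]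

lemma ptd_O : IsPointedSet O := by
  intro x hx _; rw [O_eq] at hx; exact hx

lemma rpc_of (S : Finset (Fin 2 → ℝ)) (hS : ∀ v ∈ S, ∀ i, ∃ q : ℚ, v i = (q:ℝ))
    (hp : IsPointedSet (conicalHull S)) : IsRatPointedCone (conicalHull S) :=
  ⟨⟨S, hS, rfl⟩, hp⟩

lemma ratv : ∀ v ∈ ({![(0:ℝ),1], ![2,1], ![-2,1]} : Set (Fin 2 → ℝ)), ∀ i, ∃ q : ℚ, v i = (q:ℝ) := by
  rintro v (rfl|rfl|rfl) i <;> fin_cases i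
  · exact ⟨0, by norm_num⟩
  · exact ⟨1, by norm_num⟩
  · exact ⟨2, by norm_num⟩
  · exact ⟨1, by norm_num⟩
  · exact ⟨-2, by norm_num⟩
  · exact ⟨1, by norm_num⟩

lemma rpc_C1 : IsRatPointedCone C1 := by
  refine rpc_of _ ?_ ptd_C1
  intro v hv; apply ratv; simp only [Finset.mem_insert, Finset.mem_singleton] at hv
  rcases hv with rfl|rfl <;> simp

lemma rpc_C2 : IsRatPointedCone C2 := by
  refine rpc_of _ ?_ ptd_C2
  intro v hv; apply ratv; simp only [Finset.mem_insert, Finset.mem_singleton] at hv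
  rcases hv with rfl|rfl <;> simp

lemma rpc_R0 : IsRatPointedCone R0 := by
  refine rpc_of _ ?_ ptd_R0
  intro v hv; apply ratv; simp only [Finset.mem_singleton] at hv
  rcases hv with rfl <;> simp

lemma rpc_Rp : IsRatPointedCone Rp := by
  refine rpc_of _ ?_ ptd_Rp
  intro v hv; apply ratv; simp only [Finset.mem_singleton] at hv
  rcases hv with rfl <;> simp

lemma rpc_Rm : IsRatPointedCone Rm := by
  refine rpc_of _ ?_ ptd_Rm
  intro v hv; apply ratv; simp only [Finset.mem_singleton] at hv
  rcases hv with rfl <;> simp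

lemma rpc_O : IsRatPointedCone O := by
  refine rpc_of _ (by simp) ptd_O

/-! ### subset facts -/

lemma R0_sub_C1 : R0 ⊆ C1 := by
  intro x hx; rw [mem_R0] at hx; rw [mem_C1]; constructor <;> linarith [hx.1, hx.2]
lemma Rp_sub_C1 : Rp ⊆ C1 := by
  intro x hx; rw [mem_Rp] at hx; rw [mem_C1]; constructor <;> linarith [hx.1, hx.2]
lemma R0_sub_C2 : R0 ⊆ C2 := by
  intro x hx; rw [mem_R0] at hx; rw [mem_C2]; constructor <;> linarith [hx.1, hx.2]
lemma Rm_sub_C2 : Rm ⊆ C2 := by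
  intro x hx; rw [mem_Rm] at hx; rw [mem_C2]; constructor <;> linarith [hx.1, hx.2]
lemma O_sub {C : Set (Fin 2 → ℝ)} (hC : IsConvexCone C) : O ⊆ C := by
  rw [O_eq]; rintro x rfl; exact hC.1

/-! ### face lemmas -/

lemma isFaceOf_self {C : Set (Fin 2 → ℝ)} (hC : IsConvexCone C) : IsFaceOf C C :=
  ⟨hC, subset_rfl, fun x hx y hy _ => ⟨hx, hy⟩⟩

lemma O_face {C : Set (Fin 2 → ℝ)} (hC : IsConvexCone C) (hp : IsPointedSet C) :
    IsFaceOf O C := by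
  refine ⟨cc_O, O_sub hC, ?_⟩
  intro x hx y hy hxy
  rw [O_eq] at hxy
  have hyx : y = -x := by
    have : x + y = 0 := hxy
    linear_combination (norm := abel) this
  subst hyx
  have hx0 : x = 0 := hp x hx (by simpa using hy)
  subst hx0
  simp [O_eq]

lemma R0_face_C1 : IsFaceOf R0 C1 := by
  refine ⟨cc_R0, R0_sub_C1, ?_⟩
  intro x hx y hy hxy
  rw [mem_C1] at hx hy
  rw [mem_R0] at hxy
  simp only [Pi.add_apply] at hxy
  constructor <;> rw [mem_R0] <;> constructor <;> linarith [hx.1, hx.2, hy.1, hy.2, hxy.1, hxy.2]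

lemma Rp_face_C1 : IsFaceOf Rp C1 := by
  refine ⟨cc_Rp, Rp_sub_C1, ?_⟩
  intro x hx y hy hxy
  rw [mem_C1] at hx hy
  rw [mem_Rp] at hxy
  simp only [Pi.add_apply] at hxy
  constructor <;> rw [mem_Rp] <;> constructor <;> linarith [hx.1, hx.2, hy.1, hy.2, hxy.1, hxy.2]

lemma R0_face_C2 : IsFaceOf R0 C2 := by
  refine ⟨cc_R0, R0_sub_C2, ?_⟩
  intro x hx y hy hxy
  rw [mem_C2] at hx hy
  rw [mem_R0] at hxy
  simp only [Pi.add_apply] at hxy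
  constructor <;> rw [mem_R0] <;> constructor <;> linarith [hx.1, hx.2, hy.1, hy.2, hxy.1, hxy.2]

lemma Rm_face_C2 : IsFaceOf Rm C2 := by
  refine ⟨cc_Rm, Rm_sub_C2, ?_⟩
  intro x hx y hy hxy
  rw [mem_C2] at hx hy
  rw [mem_Rm] at hxy
  simp only [Pi.add_apply] at hxy
  constructor <;> rw [mem_Rm] <;> constructor <;> linarith [hx.1, hx.2, hy.1, hy.2, hxy.1, hxy.2]

end S15
/-! ## Part 3: classification of faces -/

namespace S15

lemma faces_O {F : Set (Fin 2 → ℝ)} (h : IsFaceOf F O) : F = O := by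
  have h1 : F ⊆ O := h.2.1
  have h2 : (0 : Fin 2 → ℝ) ∈ F := h.1.1
  rw [O_eq] at h1 ⊢
  exact Set.Subset.antisymm h1 (by rintro x rfl; exact h2)

lemma faces_ray {v : Fin 2 → ℝ} (hv : v ≠ 0) {F : Set (Fin 2 → ℝ)}
    (h : IsFaceOf F (conicalHull {v})) : F = O ∨ F = conicalHull {v} := by
  by_cases hF : ∃ x ∈ F, x ≠ 0
  · right
    obtain ⟨x, hxF, hx0⟩ := hF
    obtain ⟨t, ht, rfl⟩ := (mem_conicalHull_single v _).1 (h.2.1 hxF)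
    have ht' : 0 < t := lt_of_le_of_ne ht (by rintro rfl; simp at hx0)
    apply Set.Subset.antisymm h.2.1
    intro y hy
    obtain ⟨s, hs, rfl⟩ := (mem_conicalHull_single v _).1 hy
    have : (s / t) • (t • v) ∈ F := h.1.2.2 _ hxF (s / t) (div_nonneg hs ht)
    rwa [smul_smul, div_mul_cancel₀ s (ne_of_gt ht')] at this
  · left
    push_neg at hF
    rw [O_eq]
    apply Set.Subset.antisymm
    · intro x hx
      by_contra hne
      exact hne (hF x hx)
    · rintro x rfl; exact h.1.1

lemma faces_C1 {F : Set (Fin 2 → ℝ)} (h : IsFaceOf F C1) :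
    F = O ∨ F = R0 ∨ F = Rp ∨ F = C1 := by
  obtain ⟨hcc, hsub, hsp⟩ := h
  by_cases hInt : ∃ z ∈ F, 0 < z 0 ∧ z 0 < 2 * z 1
  · right; right; right
    obtain ⟨z, hzF, hz1, hz2⟩ := hInt
    apply Set.Subset.antisymm hsub
    intro w hw
    have hwC := (mem_C1 w).1 hw
    set t : ℝ := min (z 0 / (w 0 + 1)) ((2 * z 1 - z 0) / (2 * w 1 - w 0 + 1)) with htdef
    have hw0 : 0 ≤ w 0 := hwC.1
    have hw1 : 0 ≤ 2 * w 1 - w 0 := by linarith [hwC.2]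
    have ht : 0 < t := by
      apply lt_min <;> apply div_pos <;> linarith
    have htw0 : t * w 0 ≤ z 0 := by
      have h1 : t ≤ z 0 / (w 0 + 1) := min_le_left _ _
      have : t * w 0 ≤ (z 0 / (w 0 + 1)) * w 0 := by
        apply mul_le_mul_of_nonneg_right h1 hw0
      have h2 : (z 0 / (w 0 + 1)) * w 0 ≤ z 0 := by
        rw [div_mul_eq_mul_div, div_le_iff₀ (by linarith)]
        nlinarith
      linarith
    have htw1 : t * (2 * w 1 - w 0) ≤ 2 * z 1 - z 0 := by
      have h1 : t ≤ (2 * z 1 - z 0) / (2 * w 1 - w 0 + 1) := min_le_right _ _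
      have : t * (2 * w 1 - w 0) ≤ ((2 * z 1 - z 0) / (2 * w 1 - w 0 + 1)) * (2 * w 1 - w 0) := by
        apply mul_le_mul_of_nonneg_right h1 hw1
      have h2 : ((2 * z 1 - z 0) / (2 * w 1 - w 0 + 1)) * (2 * w 1 - w 0) ≤ 2 * z 1 - z 0 := by
        rw [div_mul_eq_mul_div, div_le_iff₀ (by linarith)]
        nlinarith
      linarith
    have hmem1 : t • w ∈ C1 := by
      rw [mem_C1]
      simp only [Pi.smul_apply, smul_eq_mul]
      constructor
      · exact mul_nonneg ht.le hw0
      · nlinarith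
    have hmem2 : z - t • w ∈ C1 := by
      rw [mem_C1]
      simp only [Pi.sub_apply, Pi.smul_apply, smul_eq_mul]
      constructor
      · linarith
      · linarith
    have hzsum : (t • w) + (z - t • w) ∈ F := by
      have : (t • w) + (z - t • w) = z := by abel
      rw [this]; exact hzF
    have htwF : t • w ∈ F := (hsp _ hmem1 _ hmem2 hzsum).1
    have : t⁻¹ • (t • w) ∈ F := hcc.2.2 _ htwF t⁻¹ (inv_nonneg.mpr ht.le)
    rwa [smul_smul, inv_mul_cancel₀ (ne_of_gt ht), one_smul] at this
  · -- no interior point: each z in F has z 0 = 0 or z 0 = 2 z 1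
    push_neg at hInt
    have hbd : ∀ z ∈ F, z 0 = 0 ∨ z 0 = 2 * z 1 := by
      intro z hz
      have hzC := (mem_C1 z).1 (hsub hz)
      rcases eq_or_lt_of_le hzC.1 with h0 | h0
      · exact Or.inl h0.symm
      · rcases eq_or_lt_of_le hzC.2 with h1 | h1
        · exact Or.inr h1
        · exact absurd h1 (not_lt.2 (hInt z hz h0))
    by_cases h0 : ∃ x ∈ F, x ≠ 0 ∧ x 0 = 0
    · by_cases hp : ∃ y ∈ F, y 0 ≠ 0
      · -- contradiction: x + y is interior
        exfalso
        obtain ⟨x, hxF, hx0, hxr⟩ := h0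
        obtain ⟨y, hyF, hy0⟩ := hp
        have hxC := (mem_C1 x).1 (hsub hxF)
        have hyC := (mem_C1 y).1 (hsub hyF)
        have hx1 : 0 < x 1 := by
          rcases lt_or_eq_of_le (by linarith [hxC.2] : (0:ℝ) ≤ x 1) with h | h
          · exact h
          · exact absurd (by rw [eq_zero_iff]; exact ⟨hxr, h.symm⟩) hx0
        have hy0' : 0 < y 0 := lt_of_le_of_ne hyC.1 (Ne.symm hy0)
        have hxyF : x + y ∈ F := hcc.2.1 x hxF y hyF
        have := hInt (x + y) hxyF
        simp only [Pi.add_apply] at this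
        have hy2 : y 0 ≤ 2 * y 1 := hyC.2
        rcases this (by linarith) with h
        linarith
      · -- F ⊆ R0
        push_neg at hp
        obtain ⟨x, hxF, hx0, hxr⟩ := h0
        right; left
        apply Set.Subset.antisymm
        · intro z hz
          rw [mem_R0]
          have hzC := (mem_C1 z).1 (hsub hz)
          exact ⟨hp z hz, by linarith [hzC.1, hzC.2, (hp z hz)]⟩
        · intro y hy
          rw [mem_R0] at hy
          have hx1 : 0 < x 1 := by
            have hxC := (mem_C1 x).1 (hsub hxF)
            rcases lt_or_eq_of_le (by linarith [hxC.2] : (0:ℝ) ≤ x 1) with h | h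
            · exact h
            · exact absurd (by rw [eq_zero_iff]; exact ⟨hxr, h.symm⟩) hx0
          have : (y 1 / x 1) • x ∈ F := hcc.2.2 x hxF _ (div_nonneg hy.2 hx1.le)
          have e0 : ((y 1 / x 1) • x) 0 = y 0 := by
            simp only [Pi.smul_apply, smul_eq_mul]; rw [hxr, hy.1]; ring
          have e1 : ((y 1 / x 1) • x) 1 = y 1 := by
            simp only [Pi.smul_apply, smul_eq_mul]; field_simp
          have hxy : (y 1 / x 1) • x = y := by
            funext i; fin_cases i
            · exact e0
            · exact e1
          rwa [hxy] at this
    · -- F ⊆ Rp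
      push_neg at h0
      by_cases hF : ∃ x ∈ F, x ≠ 0
      · obtain ⟨x, hxF, hx0⟩ := hF
        have hxr : x 0 = 2 * x 1 := (hbd x hxF).resolve_left (h0 x hxF hx0)
        right; right; left
        have hx1 : 0 < x 1 := by
          have hxC := (mem_C1 x).1 (hsub hxF)
          rcases lt_or_eq_of_le (by linarith [hxC.1, hxr] : (0:ℝ) ≤ x 1) with h | h
          · exact h
          · exact absurd (by rw [eq_zero_iff]; exact ⟨by rw [hxr, ← h]; ring, h.symm⟩) hx0
        apply Set.Subset.antisymm
        · intro z hz
          rw [mem_Rp]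
          have hzC := (mem_C1 z).1 (hsub hz)
          by_cases hz0 : z = 0
          · subst hz0; simp
          · have hzr : z 0 = 2 * z 1 := by
              rcases hbd z hz with h | h
              · exact absurd h (h0 z hz hz0)
              · exact h
            exact ⟨hzr, by linarith [hzC.1, hzr]⟩
        · intro y hy
          rw [mem_Rp] at hy
          have : (y 1 / x 1) • x ∈ F := hcc.2.2 x hxF _ (div_nonneg hy.2 hx1.le)
          have e0 : ((y 1 / x 1) • x) 0 = y 0 := by
            simp only [Pi.smul_apply, smul_eq_mul]; rw [hxr, hy.1]; field_simp
          have e1 : ((y 1 / x 1) • x) 1 = y 1 := by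
            simp only [Pi.smul_apply, smul_eq_mul]; field_simp
          have hxy : (y 1 / x 1) • x = y := by
            funext i; fin_cases i
            · exact e0
            · exact e1
          rwa [hxy] at this
      · push_neg at hF
        left
        rw [O_eq]
        apply Set.Subset.antisymm
        · intro x hx
          by_contra hne
          exact hne (hF x hx)
        · rintro x rfl; exact hcc.1
end S15
/-! ## Part 4: classification of faces of C2 -/

namespace S15

lemma faces_C2 {F : Set (Fin 2 → ℝ)} (h : IsFaceOf F C2) :
    F = O ∨ F = R0 ∨ F = Rm ∨ F = C2 := by
  obtain ⟨hcc, hsub, hsp⟩ := h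
  by_cases hInt : ∃ z ∈ F, z 0 < 0 ∧ -z 0 < 2 * z 1
  · right; right; right
    obtain ⟨z, hzF, hz1, hz2⟩ := hInt
    apply Set.Subset.antisymm hsub
    intro w hw
    have hwC := (mem_C2 w).1 hw
    set t : ℝ := min (-(z 0) / (-(w 0) + 1)) ((2 * z 1 + z 0) / (2 * w 1 + w 0 + 1)) with htdef
    have hw0 : 0 ≤ -(w 0) := by linarith [hwC.1]
    have hw1 : 0 ≤ 2 * w 1 + w 0 := by linarith [hwC.2]
    have ht : 0 < t := by
      apply lt_min <;> apply div_pos <;> linarith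
    have htw0 : t * (-(w 0)) ≤ -(z 0) := by
      have h1 : t ≤ -(z 0) / (-(w 0) + 1) := min_le_left _ _
      have : t * (-(w 0)) ≤ (-(z 0) / (-(w 0) + 1)) * (-(w 0)) :=
        mul_le_mul_of_nonneg_right h1 hw0
      have h2 : (-(z 0) / (-(w 0) + 1)) * (-(w 0)) ≤ -(z 0) := by
        rw [div_mul_eq_mul_div, div_le_iff₀ (by linarith)]
        nlinarith
      linarith
    have htw1 : t * (2 * w 1 + w 0) ≤ 2 * z 1 + z 0 := by
      have h1 : t ≤ (2 * z 1 + z 0) / (2 * w 1 + w 0 + 1) := min_le_right _ _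
      have : t * (2 * w 1 + w 0) ≤ ((2 * z 1 + z 0) / (2 * w 1 + w 0 + 1)) * (2 * w 1 + w 0) :=
        mul_le_mul_of_nonneg_right h1 hw1
      have h2 : ((2 * z 1 + z 0) / (2 * w 1 + w 0 + 1)) * (2 * w 1 + w 0) ≤ 2 * z 1 + z 0 := by
        rw [div_mul_eq_mul_div, div_le_iff₀ (by linarith)]
        nlinarith
      linarith
    have hmem1 : t • w ∈ C2 := by
      rw [mem_C2]
      simp only [Pi.smul_apply, smul_eq_mul]
      constructor
      · nlinarith
      · nlinarith
    have hmem2 : z - t • w ∈ C2 := by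
      rw [mem_C2]
      simp only [Pi.sub_apply, Pi.smul_apply, smul_eq_mul]
      constructor
      · linarith
      · linarith
    have hzsum : (t • w) + (z - t • w) ∈ F := by
      have : (t • w) + (z - t • w) = z := by abel
      rw [this]; exact hzF
    have htwF : t • w ∈ F := (hsp _ hmem1 _ hmem2 hzsum).1
    have : t⁻¹ • (t • w) ∈ F := hcc.2.2 _ htwF t⁻¹ (inv_nonneg.mpr ht.le)
    rwa [smul_smul, inv_mul_cancel₀ (ne_of_gt ht), one_smul] at this
  · push_neg at hInt
    have hbd : ∀ z ∈ F, z 0 = 0 ∨ z 0 = -(2 * z 1) := by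
      intro z hz
      have hzC := (mem_C2 z).1 (hsub hz)
      rcases eq_or_lt_of_le hzC.1 with h0 | h0
      · exact Or.inl h0
      · rcases eq_or_lt_of_le hzC.2 with h1 | h1
        · exact Or.inr (by linarith)
        · exact absurd h1 (not_lt.2 (by linarith [hInt z hz h0]))
    by_cases h0 : ∃ x ∈ F, x ≠ 0 ∧ x 0 = 0
    · by_cases hp : ∃ y ∈ F, y 0 ≠ 0
      · exfalso
        obtain ⟨x, hxF, hx0, hxr⟩ := h0
        obtain ⟨y, hyF, hy0⟩ := hp
        have hxC := (mem_C2 x).1 (hsub hxF)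
        have hyC := (mem_C2 y).1 (hsub hyF)
        have hx1 : 0 < x 1 := by
          rcases lt_or_eq_of_le (by linarith [hxC.2, hxr] : (0:ℝ) ≤ x 1) with h | h
          · exact h
          · exact absurd (by rw [eq_zero_iff]; exact ⟨hxr, h.symm⟩) hx0
        have hy0' : y 0 < 0 := lt_of_le_of_ne hyC.1 hy0
        have hxyF : x + y ∈ F := hcc.2.1 x hxF y hyF
        have := hInt (x + y) hxyF
        simp only [Pi.add_apply] at this
        have hy2 : -y 0 ≤ 2 * y 1 := hyC.2
        have := this (by linarith)
        linarith
      · push_neg at hp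
        obtain ⟨x, hxF, hx0, hxr⟩ := h0
        right; left
        apply Set.Subset.antisymm
        · intro z hz
          rw [mem_R0]
          have hzC := (mem_C2 z).1 (hsub hz)
          exact ⟨hp z hz, by linarith [hzC.1, hzC.2, (hp z hz)]⟩
        · intro y hy
          rw [mem_R0] at hy
          have hx1 : 0 < x 1 := by
            have hxC := (mem_C2 x).1 (hsub hxF)
            rcases lt_or_eq_of_le (by linarith [hxC.2, hxr] : (0:ℝ) ≤ x 1) with h | h
            · exact h
            · exact absurd (by rw [eq_zero_iff]; exact ⟨hxr, h.symm⟩) hx0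
          have hmem : (y 1 / x 1) • x ∈ F := hcc.2.2 x hxF _ (div_nonneg hy.2 hx1.le)
          have e0 : ((y 1 / x 1) • x) 0 = y 0 := by
            simp only [Pi.smul_apply, smul_eq_mul]; rw [hxr, hy.1]; ring
          have e1 : ((y 1 / x 1) • x) 1 = y 1 := by
            simp only [Pi.smul_apply, smul_eq_mul]; field_simp
          have hxy : (y 1 / x 1) • x = y := by
            funext i; fin_cases i
            · exact e0
            · exact e1
          rwa [hxy] at hmem
    · push_neg at h0
      by_cases hF : ∃ x ∈ F, x ≠ 0
      · obtain ⟨x, hxF, hx0⟩ := hF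
        have hxr : x 0 = -(2 * x 1) := (hbd x hxF).resolve_left (h0 x hxF hx0)
        right; right; left
        have hx1 : 0 < x 1 := by
          have hxC := (mem_C2 x).1 (hsub hxF)
          rcases lt_or_eq_of_le (by linarith [hxC.1, hxr] : (0:ℝ) ≤ x 1) with h | h
          · exact h
          · exact absurd (by rw [eq_zero_iff]; exact ⟨by rw [hxr, ← h]; ring, h.symm⟩) hx0
        apply Set.Subset.antisymm
        · intro z hz
          rw [mem_Rm]
          have hzC := (mem_C2 z).1 (hsub hz)
          by_cases hz0 : z = 0
          · subst hz0; simp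
          · have hzr : z 0 = -(2 * z 1) := (hbd z hz).resolve_left (h0 z hz hz0)
            exact ⟨hzr, by linarith [hzC.1, hzr]⟩
        · intro y hy
          rw [mem_Rm] at hy
          have hmem : (y 1 / x 1) • x ∈ F := hcc.2.2 x hxF _ (div_nonneg hy.2 hx1.le)
          have e0 : ((y 1 / x 1) • x) 0 = y 0 := by
            simp only [Pi.smul_apply, smul_eq_mul]; rw [hxr, hy.1]; field_simp
          have e1 : ((y 1 / x 1) • x) 1 = y 1 := by
            simp only [Pi.smul_apply, smul_eq_mul]; field_simp
          have hxy : (y 1 / x 1) • x = y := by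
            funext i; fin_cases i
            · exact e0
            · exact e1
          rwa [hxy] at hmem
      · push_neg at hF
        left
        rw [O_eq]
        apply Set.Subset.antisymm
        · intro x hx
          by_contra hne
          exact hne (hF x hx)
        · rintro x rfl; exact hcc.1

end S15
/-! ## Part 5: intersections and fans -/

namespace S15

lemma mem_O (x : Fin 2 → ℝ) : x ∈ O ↔ x 0 = 0 ∧ x 1 = 0 := by
  rw [O_eq, Set.mem_singleton_iff, eq_zero_iff]

lemma i12 : C1 ∩ C2 = R0 := by
  ext x; simp only [Set.mem_inter_iff, mem_C1, mem_C2, mem_R0]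
  constructor
  · rintro ⟨⟨a, b⟩, ⟨c, d⟩⟩; constructor <;> linarith
  · rintro ⟨a, b⟩; refine ⟨⟨by linarith, by linarith⟩, by linarith, by linarith⟩

lemma i10 : C1 ∩ R0 = R0 := by
  ext x; simp only [Set.mem_inter_iff, mem_C1, mem_R0]
  constructor
  · rintro ⟨_, h⟩; exact h
  · rintro ⟨a, b⟩; refine ⟨⟨by linarith, by linarith⟩, a, b⟩

lemma i1p : C1 ∩ Rp = Rp := by
  ext x; simp only [Set.mem_inter_iff, mem_C1, mem_Rp]
  constructor
  · rintro ⟨_, h⟩; exact h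
  · rintro ⟨a, b⟩; refine ⟨⟨by linarith, by linarith⟩, a, b⟩

lemma i1m : C1 ∩ Rm = O := by
  ext x; simp only [Set.mem_inter_iff, mem_C1, mem_Rm, mem_O]
  constructor
  · rintro ⟨⟨a, b⟩, ⟨c, d⟩⟩; constructor <;> linarith
  · rintro ⟨a, b⟩; refine ⟨⟨by linarith, by linarith⟩, by linarith, by linarith⟩

lemma i1O : C1 ∩ O = O := by
  ext x; simp only [Set.mem_inter_iff, mem_C1, mem_O]
  constructor
  · rintro ⟨_, h⟩; exact h
  · rintro ⟨a, b⟩; refine ⟨⟨by linarith, by linarith⟩, a, b⟩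

lemma i20 : C2 ∩ R0 = R0 := by
  ext x; simp only [Set.mem_inter_iff, mem_C2, mem_R0]
  constructor
  · rintro ⟨_, h⟩; exact h
  · rintro ⟨a, b⟩; refine ⟨⟨by linarith, by linarith⟩, a, b⟩

lemma i2p : C2 ∩ Rp = O := by
  ext x; simp only [Set.mem_inter_iff, mem_C2, mem_Rp, mem_O]
  constructor
  · rintro ⟨⟨a, b⟩, ⟨c, d⟩⟩; constructor <;> linarith
  · rintro ⟨a, b⟩; refine ⟨⟨by linarith, by linarith⟩, by linarith, by linarith⟩

lemma i2m : C2 ∩ Rm = Rm := by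
  ext x; simp only [Set.mem_inter_iff, mem_C2, mem_Rm]
  constructor
  · rintro ⟨_, h⟩; exact h
  · rintro ⟨a, b⟩; refine ⟨⟨by linarith, by linarith⟩, a, b⟩

lemma i2O : C2 ∩ O = O := by
  ext x; simp only [Set.mem_inter_iff, mem_C2, mem_O]
  constructor
  · rintro ⟨_, h⟩; exact h
  · rintro ⟨a, b⟩; refine ⟨⟨by linarith, by linarith⟩, a, b⟩

lemma i0p : R0 ∩ Rp = O := by
  ext x; simp only [Set.mem_inter_iff, mem_R0, mem_Rp, mem_O]
  constructor
  · rintro ⟨⟨a, b⟩, ⟨c, d⟩⟩; constructor <;> linarith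
  · rintro ⟨a, b⟩; refine ⟨⟨by linarith, by linarith⟩, by linarith, by linarith⟩

lemma i0m : R0 ∩ Rm = O := by
  ext x; simp only [Set.mem_inter_iff, mem_R0, mem_Rm, mem_O]
  constructor
  · rintro ⟨⟨a, b⟩, ⟨c, d⟩⟩; constructor <;> linarith
  · rintro ⟨a, b⟩; refine ⟨⟨by linarith, by linarith⟩, by linarith, by linarith⟩

lemma i0O : R0 ∩ O = O := by
  ext x; simp only [Set.mem_inter_iff, mem_R0, mem_O]
  constructor
  · rintro ⟨_, h⟩; exact h
  · rintro ⟨a, b⟩; refine ⟨⟨by linarith, by linarith⟩, a, b⟩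

lemma ipm : Rp ∩ Rm = O := by
  ext x; simp only [Set.mem_inter_iff, mem_Rp, mem_Rm, mem_O]
  constructor
  · rintro ⟨⟨a, b⟩, ⟨c, d⟩⟩; constructor <;> linarith
  · rintro ⟨a, b⟩; refine ⟨⟨by linarith, by linarith⟩, by linarith, by linarith⟩

lemma ipO : Rp ∩ O = O := by
  ext x; simp only [Set.mem_inter_iff, mem_Rp, mem_O]
  constructor
  · rintro ⟨_, h⟩; exact h
  · rintro ⟨a, b⟩; refine ⟨⟨by linarith, by linarith⟩, a, b⟩

lemma imO : Rm ∩ O = O := by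
  ext x; simp only [Set.mem_inter_iff, mem_Rm, mem_O]
  constructor
  · rintro ⟨_, h⟩; exact h
  · rintro ⟨a, b⟩; refine ⟨⟨by linarith, by linarith⟩, a, b⟩

/-- helper to produce the two face statements from an intersection identity -/
lemma face2 {C C' D : Set (Fin 2 → ℝ)} (hI : C ∩ C' = D)
    (h1 : IsFaceOf D C) (h2 : IsFaceOf D C') :
    IsFaceOf (C ∩ C') C ∧ IsFaceOf (C ∩ C') C' := by
  rw [hI]; exact ⟨h1, h2⟩

lemma O_face_C1 : IsFaceOf O C1 := O_face cc_C1 ptd_C1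
lemma O_face_C2 : IsFaceOf O C2 := O_face cc_C2 ptd_C2
lemma O_face_R0 : IsFaceOf O R0 := O_face cc_R0 ptd_R0
lemma O_face_Rp : IsFaceOf O Rp := O_face cc_Rp ptd_Rp
lemma O_face_Rm : IsFaceOf O Rm := O_face cc_Rm ptd_Rm
lemma O_face_O : IsFaceOf O O := isFaceOf_self cc_O

lemma R0_face_R0 : IsFaceOf R0 R0 := isFaceOf_self cc_R0
lemma Rp_face_Rp : IsFaceOf Rp Rp := isFaceOf_self cc_Rp
lemma Rm_face_Rm : IsFaceOf Rm Rm := isFaceOf_self cc_Rm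
lemma C1_face_C1 : IsFaceOf C1 C1 := isFaceOf_self cc_C1
lemma C2_face_C2 : IsFaceOf C2 C2 := isFaceOf_self cc_C2

def FanSet : Set (Set (Fin 2 → ℝ)) := {C1, C2, R0, Rp, Rm, O}

lemma fanset_finite : FanSet.Finite := by
  apply Set.Finite.insert
  apply Set.Finite.insert
  apply Set.Finite.insert
  apply Set.Finite.insert
  apply Set.Finite.insert
  exact Set.finite_singleton _

lemma fanset_inter : ∀ C ∈ FanSet, ∀ C' ∈ FanSet,
    IsFaceOf (C ∩ C') C ∧ IsFaceOf (C ∩ C') C' := by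
  intro C hC C' hC'
  simp only [FanSet, Set.mem_insert_iff, Set.mem_singleton_iff] at hC hC'
  rcases hC with rfl|rfl|rfl|rfl|rfl|rfl <;> rcases hC' with rfl|rfl|rfl|rfl|rfl|rfl
  · rw [Set.inter_self]; exact ⟨C1_face_C1, C1_face_C1⟩
  · exact face2 i12 R0_face_C1 R0_face_C2
  · exact face2 i10 R0_face_C1 R0_face_R0
  · exact face2 i1p Rp_face_C1 Rp_face_Rp
  · exact face2 i1m O_face_C1 O_face_Rm
  · exact face2 i1O O_face_C1 O_face_O
  · exact face2 (by rw [Set.inter_comm]; exact i12) R0_face_C2 R0_face_C1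
  · rw [Set.inter_self]; exact ⟨C2_face_C2, C2_face_C2⟩
  · exact face2 i20 R0_face_C2 R0_face_R0
  · exact face2 i2p O_face_C2 O_face_Rp
  · exact face2 i2m Rm_face_C2 Rm_face_Rm
  · exact face2 i2O O_face_C2 O_face_O
  · exact face2 (by rw [Set.inter_comm]; exact i10) R0_face_R0 R0_face_C1
  · exact face2 (by rw [Set.inter_comm]; exact i20) R0_face_R0 R0_face_C2
  · rw [Set.inter_self]; exact ⟨R0_face_R0, R0_face_R0⟩
  · exact face2 i0p O_face_R0 O_face_Rp
  · exact face2 i0m O_face_R0 O_face_Rm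
  · exact face2 i0O O_face_R0 O_face_O
  · exact face2 (by rw [Set.inter_comm]; exact i1p) Rp_face_Rp Rp_face_C1
  · exact face2 (by rw [Set.inter_comm]; exact i2p) O_face_Rp O_face_C2
  · exact face2 (by rw [Set.inter_comm]; exact i0p) O_face_Rp O_face_R0
  · rw [Set.inter_self]; exact ⟨Rp_face_Rp, Rp_face_Rp⟩
  · exact face2 ipm O_face_Rp O_face_Rm
  · exact face2 ipO O_face_Rp O_face_O
  · exact face2 (by rw [Set.inter_comm]; exact i1m) O_face_Rm O_face_C1
  · exact face2 (by rw [Set.inter_comm]; exact i2m) Rm_face_Rm Rm_face_C2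
  · exact face2 (by rw [Set.inter_comm]; exact i0m) O_face_Rm O_face_R0
  · exact face2 (by rw [Set.inter_comm]; exact ipm) O_face_Rm O_face_Rp
  · rw [Set.inter_self]; exact ⟨Rm_face_Rm, Rm_face_Rm⟩
  · exact face2 imO O_face_Rm O_face_O
  · exact face2 (by rw [Set.inter_comm]; exact i1O) O_face_O O_face_C1
  · exact face2 (by rw [Set.inter_comm]; exact i2O) O_face_O O_face_C2
  · exact face2 (by rw [Set.inter_comm]; exact i0O) O_face_O O_face_R0
  · exact face2 (by rw [Set.inter_comm]; exact ipO) O_face_O O_face_Rp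
  · exact face2 (by rw [Set.inter_comm]; exact imO) O_face_O O_face_Rm
  · rw [Set.inter_self]; exact ⟨O_face_O, O_face_O⟩

lemma ne0_01 : (![(0:ℝ),1]) ≠ 0 := by
  intro h; have := congrFun h 1; norm_num at this
lemma ne0_21 : (![(2:ℝ),1]) ≠ 0 := by
  intro h; have := congrFun h 0; norm_num at this
lemma ne0_m21 : (![(-2:ℝ),1]) ≠ 0 := by
  intro h; have := congrFun h 0; norm_num at this

/-- The fan Σ. -/
def Phi : Fan 2 where
  cones := FanSet
  finite := fanset_finite
  pointed := by
    intro C hC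
    simp only [FanSet, Set.mem_insert_iff, Set.mem_singleton_iff] at hC
    rcases hC with rfl|rfl|rfl|rfl|rfl|rfl
    exacts [rpc_C1, rpc_C2, rpc_R0, rpc_Rp, rpc_Rm, rpc_O]
  faces_mem := by
    intro C hC C' hC'
    simp only [FanSet, Set.mem_insert_iff, Set.mem_singleton_iff] at hC ⊢
    rcases hC with rfl|rfl|rfl|rfl|rfl|rfl
    · rcases faces_C1 hC' with rfl|rfl|rfl|rfl <;> tauto
    · rcases faces_C2 hC' with rfl|rfl|rfl|rfl <;> tauto
    · rcases faces_ray ne0_01 hC' with rfl|h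
      · tauto
      · rw [show conicalHull {![(0:ℝ),1]} = R0 from rfl] at h; tauto
    · rcases faces_ray ne0_21 hC' with rfl|h
      · tauto
      · rw [show conicalHull {![(2:ℝ),1]} = Rp from rfl] at h; tauto
    · rcases faces_ray ne0_m21 hC' with rfl|h
      · tauto
      · rw [show conicalHull {![(-2:ℝ),1]} = Rm from rfl] at h; tauto
    · rcases faces_O hC' with rfl; tauto
  inter_face := fanset_inter

lemma Phi_cones : Phi.cones = FanSet := rfl

/-- Boundary fan of C1. -/
def B1 : Fan 2 where
  cones := {R0, Rp, O}
  finite := (Set.finite_singleton _).insert _ |>.insert _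
  pointed := by
    rintro C (rfl|rfl|rfl)
    exacts [rpc_R0, rpc_Rp, rpc_O]
  faces_mem := by
    rintro C (rfl|rfl|rfl) C' hC'
    · rcases faces_ray ne0_01 hC' with rfl|h
      · right; right; rfl
      · left; exact h
    · rcases faces_ray ne0_21 hC' with rfl|h
      · right; right; rfl
      · right; left; exact h
    · rcases faces_O hC' with rfl; right; right; rfl
  inter_face := by
    rintro C (rfl|rfl|rfl) C' (rfl|rfl|rfl)
    · rw [Set.inter_self]; exact ⟨R0_face_R0, R0_face_R0⟩
    · exact face2 i0p O_face_R0 O_face_Rp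
    · exact face2 i0O O_face_R0 O_face_O
    · exact face2 (by rw [Set.inter_comm]; exact i0p) O_face_Rp O_face_R0
    · rw [Set.inter_self]; exact ⟨Rp_face_Rp, Rp_face_Rp⟩
    · exact face2 ipO O_face_Rp O_face_O
    · exact face2 (by rw [Set.inter_comm]; exact i0O) O_face_O O_face_R0
    · exact face2 (by rw [Set.inter_comm]; exact ipO) O_face_O O_face_Rp
    · rw [Set.inter_self]; exact ⟨O_face_O, O_face_O⟩

/-- Boundary fan of C2. -/
def B2 : Fan 2 where
  cones := {R0, Rm, O}
  finite := (Set.finite_singleton _).insert _ |>.insert _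
  pointed := by
    rintro C (rfl|rfl|rfl)
    exacts [rpc_R0, rpc_Rm, rpc_O]
  faces_mem := by
    rintro C (rfl|rfl|rfl) C' hC'
    · rcases faces_ray ne0_01 hC' with rfl|h
      · right; right; rfl
      · left; exact h
    · rcases faces_ray ne0_m21 hC' with rfl|h
      · right; right; rfl
      · right; left; exact h
    · rcases faces_O hC' with rfl; right; right; rfl
  inter_face := by
    rintro C (rfl|rfl|rfl) C' (rfl|rfl|rfl)
    · rw [Set.inter_self]; exact ⟨R0_face_R0, R0_face_R0⟩
    · exact face2 i0m O_face_R0 O_face_Rm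
    · exact face2 i0O O_face_R0 O_face_O
    · exact face2 (by rw [Set.inter_comm]; exact i0m) O_face_Rm O_face_R0
    · rw [Set.inter_self]; exact ⟨Rm_face_Rm, Rm_face_Rm⟩
    · exact face2 imO O_face_Rm O_face_O
    · exact face2 (by rw [Set.inter_comm]; exact i0O) O_face_O O_face_R0
    · exact face2 (by rw [Set.inter_comm]; exact imO) O_face_O O_face_Rm
    · rw [Set.inter_self]; exact ⟨O_face_O, O_face_O⟩

/-- The trivial fan. -/
def ZF : Fan 2 where
  cones := {O}
  finite := Set.finite_singleton _
  pointed := by rintro C rfl; exact rpc_O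
  faces_mem := by
    rintro C rfl C' hC'
    rcases faces_O hC' with rfl; rfl
  inter_face := by
    rintro C rfl C' rfl
    rw [Set.inter_self]; exact ⟨O_face_O, O_face_O⟩

end S15
/-! ## Part 6: shelling -/

namespace S15

lemma nsub {A B : Set (Fin 2 → ℝ)} (x : Fin 2 → ℝ) (hx : x ∈ A) (hx' : x ∉ B) : ¬ A ⊆ B :=
  fun h => hx' (h hx)

lemma w21_C1 : (![(2:ℝ),1]) ∈ C1 := by rw [mem_C1]; norm_num
lemma w21_Rp : (![(2:ℝ),1]) ∈ Rp := by rw [mem_Rp]; norm_num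
lemma w21_nC2 : (![(2:ℝ),1]) ∉ C2 := by rw [mem_C2]; norm_num
lemma w21_nR0 : (![(2:ℝ),1]) ∉ R0 := by rw [mem_R0]; norm_num
lemma w21_nRm : (![(2:ℝ),1]) ∉ Rm := by rw [mem_Rm]; norm_num
lemma w21_nO : (![(2:ℝ),1]) ∉ O := by rw [mem_O]; norm_num
lemma wm21_C2 : (![(-2:ℝ),1]) ∈ C2 := by rw [mem_C2]; norm_num
lemma wm21_Rm : (![(-2:ℝ),1]) ∈ Rm := by rw [mem_Rm]; norm_num
lemma wm21_nC1 : (![(-2:ℝ),1]) ∉ C1 := by rw [mem_C1]; norm_num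
lemma wm21_nR0 : (![(-2:ℝ),1]) ∉ R0 := by rw [mem_R0]; norm_num
lemma wm21_nRp : (![(-2:ℝ),1]) ∉ Rp := by rw [mem_Rp]; norm_num
lemma wm21_nO : (![(-2:ℝ),1]) ∉ O := by rw [mem_O]; norm_num
lemma w01_C1 : (![(0:ℝ),1]) ∈ C1 := by rw [mem_C1]; norm_num
lemma w01_C2 : (![(0:ℝ),1]) ∈ C2 := by rw [mem_C2]; norm_num
lemma w01_R0 : (![(0:ℝ),1]) ∈ R0 := by rw [mem_R0]; norm_num
lemma w01_nRp : (![(0:ℝ),1]) ∉ Rp := by rw [mem_Rp]; norm_num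
lemma w01_nRm : (![(0:ℝ),1]) ∉ Rm := by rw [mem_Rm]; norm_num
lemma w01_nO : (![(0:ℝ),1]) ∉ O := by rw [mem_O]; norm_num

lemma nsub_C1_C2 : ¬ C1 ⊆ C2 := nsub _ w21_C1 w21_nC2
lemma nsub_C1_R0 : ¬ C1 ⊆ R0 := nsub _ w21_C1 w21_nR0
lemma nsub_C1_Rp : ¬ C1 ⊆ Rp := nsub _ w01_C1 w01_nRp
lemma nsub_C1_Rm : ¬ C1 ⊆ Rm := nsub _ w21_C1 w21_nRm
lemma nsub_C1_O : ¬ C1 ⊆ O := nsub _ w21_C1 w21_nO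
lemma nsub_C2_C1 : ¬ C2 ⊆ C1 := nsub _ wm21_C2 wm21_nC1
lemma nsub_C2_R0 : ¬ C2 ⊆ R0 := nsub _ wm21_C2 wm21_nR0
lemma nsub_C2_Rp : ¬ C2 ⊆ Rp := nsub _ wm21_C2 wm21_nRp
lemma nsub_C2_Rm : ¬ C2 ⊆ Rm := nsub _ w01_C2 w01_nRm
lemma nsub_C2_O : ¬ C2 ⊆ O := nsub _ wm21_C2 wm21_nO
lemma nsub_R0_Rp : ¬ R0 ⊆ Rp := nsub _ w01_R0 w01_nRp
lemma nsub_R0_Rm : ¬ R0 ⊆ Rm := nsub _ w01_R0 w01_nRm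
lemma nsub_R0_O : ¬ R0 ⊆ O := nsub _ w01_R0 w01_nO
lemma nsub_Rp_R0 : ¬ Rp ⊆ R0 := nsub _ w21_Rp w21_nR0
lemma nsub_Rp_C2 : ¬ Rp ⊆ C2 := nsub _ w21_Rp w21_nC2
lemma nsub_Rp_Rm : ¬ Rp ⊆ Rm := nsub _ w21_Rp w21_nRm
lemma nsub_Rp_O : ¬ Rp ⊆ O := nsub _ w21_Rp w21_nO
lemma nsub_Rm_R0 : ¬ Rm ⊆ R0 := nsub _ wm21_Rm wm21_nR0
lemma nsub_Rm_C1 : ¬ Rm ⊆ C1 := nsub _ wm21_Rm wm21_nC1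
lemma nsub_Rm_Rp : ¬ Rm ⊆ Rp := nsub _ wm21_Rm wm21_nRp
lemma nsub_Rm_O : ¬ Rm ⊆ O := nsub _ wm21_Rm wm21_nO

lemma ne_of_nsub {A B : Set (Fin 2 → ℝ)} (h : ¬ A ⊆ B) : A ≠ B := fun he => h he.subset
lemma ne'_of_nsub {A B : Set (Fin 2 → ℝ)} (h : ¬ A ⊆ B) : B ≠ A := fun he => h he.symm.subset

lemma ne_C1_C2 : C1 ≠ C2 := ne_of_nsub nsub_C1_C2
lemma ne_R0_Rp : R0 ≠ Rp := ne_of_nsub nsub_R0_Rp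
lemma ne_R0_Rm : R0 ≠ Rm := ne_of_nsub nsub_R0_Rm

lemma O_sub_C1 : O ⊆ C1 := O_sub cc_C1
lemma O_sub_C2 : O ⊆ C2 := O_sub cc_C2
lemma O_sub_R0 : O ⊆ R0 := O_sub cc_R0
lemma O_sub_Rp : O ⊆ Rp := O_sub cc_Rp
lemma O_sub_Rm : O ⊆ Rm := O_sub cc_Rm

lemma C1_mem : C1 ∈ FanSet := by left; rfl
lemma C2_mem : C2 ∈ FanSet := by right; left; rfl
lemma R0_mem : R0 ∈ FanSet := by right; right; left; rfl
lemma Rp_mem : Rp ∈ FanSet := by right; right; right; left; rfl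
lemma Rm_mem : Rm ∈ FanSet := by right; right; right; right; left; rfl
lemma O_mem : O ∈ FanSet := by right; right; right; right; right; rfl

/-- facets of Phi -/
lemma facets_Phi : {C | IsFacet Phi C} = {C1, C2} := by
  ext C
  simp only [Set.mem_setOf_eq, Set.mem_insert_iff, Set.mem_singleton_iff]
  constructor
  · rintro ⟨hC, hmax⟩
    rcases hC with rfl|rfl|rfl|rfl|rfl|rfl
    · left; rfl
    · right; rfl
    · exact absurd (hmax C1 C1_mem R0_sub_C1) (ne_of_nsub nsub_C1_R0)
    · exact absurd (hmax C1 C1_mem Rp_sub_C1) (ne_of_nsub nsub_C1_Rp)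
    · exact absurd (hmax C2 C2_mem Rm_sub_C2) (ne_of_nsub nsub_C2_Rm)
    · exact absurd (hmax C1 C1_mem O_sub_C1) (ne_of_nsub nsub_C1_O)
  · rintro (rfl|rfl)
    · refine ⟨C1_mem, ?_⟩
      rintro D (rfl|rfl|rfl|rfl|rfl|rfl) hsub
      · rfl
      · exact absurd hsub nsub_C1_C2
      · exact absurd hsub nsub_C1_R0
      · exact absurd hsub nsub_C1_Rp
      · exact absurd hsub nsub_C1_Rm
      · exact absurd hsub nsub_C1_O
    · refine ⟨C2_mem, ?_⟩
      rintro D (rfl|rfl|rfl|rfl|rfl|rfl) hsub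
      · exact absurd hsub nsub_C2_C1
      · rfl
      · exact absurd hsub nsub_C2_R0
      · exact absurd hsub nsub_C2_Rp
      · exact absurd hsub nsub_C2_Rm
      · exact absurd hsub nsub_C2_O

lemma facets_B1 : {C | IsFacet B1 C} = {R0, Rp} := by
  ext C
  simp only [Set.mem_setOf_eq, Set.mem_insert_iff, Set.mem_singleton_iff]
  constructor
  · rintro ⟨hC, hmax⟩
    rcases hC with rfl|rfl|rfl
    · left; rfl
    · right; rfl
    · exact absurd (hmax R0 (by left; rfl) O_sub_R0) (ne_of_nsub nsub_R0_O)
  · rintro (rfl|rfl)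
    · refine ⟨by left; rfl, ?_⟩
      rintro D (rfl|rfl|rfl) hsub
      · rfl
      · exact absurd hsub nsub_R0_Rp
      · exact absurd hsub nsub_R0_O
    · refine ⟨by right; left; rfl, ?_⟩
      rintro D (rfl|rfl|rfl) hsub
      · exact absurd hsub nsub_Rp_R0
      · rfl
      · exact absurd hsub nsub_Rp_O

lemma facets_B2 : {C | IsFacet B2 C} = {R0, Rm} := by
  ext C
  simp only [Set.mem_setOf_eq, Set.mem_insert_iff, Set.mem_singleton_iff]
  constructor
  · rintro ⟨hC, hmax⟩
    rcases hC with rfl|rfl|rfl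
    · left; rfl
    · right; rfl
    · exact absurd (hmax R0 (by left; rfl) O_sub_R0) (ne_of_nsub nsub_R0_O)
  · rintro (rfl|rfl)
    · refine ⟨by left; rfl, ?_⟩
      rintro D (rfl|rfl|rfl) hsub
      · rfl
      · exact absurd hsub nsub_R0_Rm
      · exact absurd hsub nsub_R0_O
    · refine ⟨by right; left; rfl, ?_⟩
      rintro D (rfl|rfl|rfl) hsub
      · exact absurd hsub nsub_Rm_R0
      · rfl
      · exact absurd hsub nsub_Rm_O

lemma facets_ZF : {C | IsFacet ZF C} = {O} := by
  ext C
  simp only [Set.mem_setOf_eq, Set.mem_singleton_iff]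
  constructor
  · rintro ⟨hC, _⟩; exact hC
  · rintro rfl
    exact ⟨rfl, by rintro D rfl _; rfl⟩

lemma dim_ZF : Fan.dim ZF = 0 := by
  have : ZF.cones = {O} := rfl
  rw [Fan.dim, this, Set.image_singleton, csSup_singleton]
  rw [coneDim, O_eq, Submodule.span_zero_singleton]
  exact finrank_bot ℝ _

/-- bdFaceSets -/
lemma bd_Phi_C1 : bdFaceSet Phi C1 = B1.cones := by
  ext D
  simp only [bdFaceSet, Set.mem_setOf_eq]
  constructor
  · rintro ⟨hD, hsub, hne⟩
    rcases hD with rfl|rfl|rfl|rfl|rfl|rfl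
    · exact absurd rfl hne
    · exact absurd hsub nsub_C2_C1
    · left; rfl
    · right; left; rfl
    · exact absurd hsub nsub_Rm_C1
    · right; right; rfl
  · rintro (rfl|rfl|rfl)
    · exact ⟨R0_mem, R0_sub_C1, (ne_of_nsub nsub_C1_R0).symm⟩
    · exact ⟨Rp_mem, Rp_sub_C1, (ne_of_nsub nsub_C1_Rp).symm⟩
    · exact ⟨O_mem, O_sub_C1, (ne_of_nsub nsub_C1_O).symm⟩

lemma bd_Phi_C2 : bdFaceSet Phi C2 = B2.cones := by
  ext D
  simp only [bdFaceSet, Set.mem_setOf_eq]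
  constructor
  · rintro ⟨hD, hsub, hne⟩
    rcases hD with rfl|rfl|rfl|rfl|rfl|rfl
    · exact absurd hsub nsub_C1_C2
    · exact absurd rfl hne
    · left; rfl
    · exact absurd hsub nsub_Rp_C2
    · right; left; rfl
    · right; right; rfl
  · rintro (rfl|rfl|rfl)
    · exact ⟨R0_mem, R0_sub_C2, (ne_of_nsub nsub_C2_R0).symm⟩
    · exact ⟨Rm_mem, Rm_sub_C2, (ne_of_nsub nsub_C2_Rm).symm⟩
    · exact ⟨O_mem, O_sub_C2, (ne_of_nsub nsub_C2_O).symm⟩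

lemma bd_B1_R0 : bdFaceSet B1 R0 = ZF.cones := by
  ext D
  simp only [bdFaceSet, Set.mem_setOf_eq]
  constructor
  · rintro ⟨hD, hsub, hne⟩
    rcases hD with rfl|rfl|rfl
    · exact absurd rfl hne
    · exact absurd hsub nsub_Rp_R0
    · rfl
  · rintro rfl
    exact ⟨by right; right; rfl, O_sub_R0, (ne_of_nsub nsub_R0_O).symm⟩

lemma bd_B1_Rp : bdFaceSet B1 Rp = ZF.cones := by
  ext D
  simp only [bdFaceSet, Set.mem_setOf_eq]
  constructor
  · rintro ⟨hD, hsub, hne⟩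
    rcases hD with rfl|rfl|rfl
    · exact absurd hsub nsub_R0_Rp
    · exact absurd rfl hne
    · rfl
  · rintro rfl
    exact ⟨by right; right; rfl, O_sub_Rp, (ne_of_nsub nsub_Rp_O).symm⟩

lemma bd_B2_R0 : bdFaceSet B2 R0 = ZF.cones := by
  ext D
  simp only [bdFaceSet, Set.mem_setOf_eq]
  constructor
  · rintro ⟨hD, hsub, hne⟩
    rcases hD with rfl|rfl|rfl
    · exact absurd rfl hne
    · exact absurd hsub nsub_Rm_R0
    · rfl
  · rintro rfl
    exact ⟨by right; right; rfl, O_sub_R0, (ne_of_nsub nsub_R0_O).symm⟩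

lemma bd_B2_Rm : bdFaceSet B2 Rm = ZF.cones := by
  ext D
  simp only [bdFaceSet, Set.mem_setOf_eq]
  constructor
  · rintro ⟨hD, hsub, hne⟩
    rcases hD with rfl|rfl|rfl
    · exact absurd hsub nsub_R0_Rm
    · exact absurd rfl hne
    · rfl
  · rintro rfl
    exact ⟨by right; right; rfl, O_sub_Rm, (ne_of_nsub nsub_Rm_O).symm⟩

/-- faceSets -/
lemma fs_Phi_C1 : faceSet Phi C1 = {C1, R0, Rp, O} := by
  ext D
  simp only [faceSet, Set.mem_setOf_eq, Set.mem_insert_iff, Set.mem_singleton_iff]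
  constructor
  · rintro ⟨hD, hsub⟩
    rcases hD with rfl|rfl|rfl|rfl|rfl|rfl
    · tauto
    · exact absurd hsub nsub_C2_C1
    · tauto
    · tauto
    · exact absurd hsub nsub_Rm_C1
    · tauto
  · rintro (rfl|rfl|rfl|rfl)
    · exact ⟨C1_mem, subset_rfl⟩
    · exact ⟨R0_mem, R0_sub_C1⟩
    · exact ⟨Rp_mem, Rp_sub_C1⟩
    · exact ⟨O_mem, O_sub_C1⟩

lemma fs_Phi_C2 : faceSet Phi C2 = {C2, R0, Rm, O} := by
  ext D
  simp only [faceSet, Set.mem_setOf_eq, Set.mem_insert_iff, Set.mem_singleton_iff]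
  constructor
  · rintro ⟨hD, hsub⟩
    rcases hD with rfl|rfl|rfl|rfl|rfl|rfl
    · exact absurd hsub nsub_C1_C2
    · tauto
    · tauto
    · exact absurd hsub nsub_Rp_C2
    · tauto
    · tauto
  · rintro (rfl|rfl|rfl|rfl)
    · exact ⟨C2_mem, subset_rfl⟩
    · exact ⟨R0_mem, R0_sub_C2⟩
    · exact ⟨Rm_mem, Rm_sub_C2⟩
    · exact ⟨O_mem, O_sub_C2⟩

lemma fs_inter : faceSet Phi C1 ∩ faceSet Phi C2 = {R0, O} := by
  rw [fs_Phi_C1, fs_Phi_C2]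
  ext D
  simp only [Set.mem_inter_iff, Set.mem_insert_iff, Set.mem_singleton_iff]
  constructor
  · rintro ⟨(rfl|rfl|rfl|rfl), (h|h|h|h)⟩ <;>
      first
        | (left; rfl)
        | (right; rfl)
        | (exact absurd h ne_C1_C2)
        | (exact absurd h (ne_of_nsub nsub_C1_R0))
        | (exact absurd h (ne_of_nsub nsub_C1_Rm))
        | (exact absurd h (ne_of_nsub nsub_C1_O))
        | (exact absurd h.symm (ne_of_nsub nsub_C2_R0))
        | (exact absurd h ne_R0_Rm)
        | (exact absurd h (ne_of_nsub nsub_R0_O))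
        | (exact absurd h.symm (ne_of_nsub nsub_C2_Rp))
        | (exact absurd h.symm ne_R0_Rp)
        | (exact absurd h.symm (ne_of_nsub nsub_Rm_Rp))
        | (exact absurd h (ne_of_nsub nsub_Rp_O))
        | (exact absurd h.symm (ne_of_nsub nsub_C2_O))
        | (exact absurd h.symm (ne_of_nsub nsub_R0_O))
        | (exact absurd h.symm (ne_of_nsub nsub_Rm_O))
  · rintro (rfl|rfl)
    · exact ⟨by tauto, by tauto⟩
    · exact ⟨by tauto, by tauto⟩

lemma fs_B2_R0 : faceSet B2 R0 = {R0, O} := by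
  ext D
  simp only [faceSet, Set.mem_setOf_eq, Set.mem_insert_iff, Set.mem_singleton_iff]
  constructor
  · rintro ⟨hD, hsub⟩
    rcases hD with rfl|rfl|rfl
    · tauto
    · exact absurd hsub nsub_Rm_R0
    · tauto
  · rintro (rfl|rfl)
    · exact ⟨by left; rfl, subset_rfl⟩
    · exact ⟨by right; right; rfl, O_sub_R0⟩

lemma fs_B1_R0 : faceSet B1 R0 = {R0, O} := by
  ext D
  simp only [faceSet, Set.mem_setOf_eq, Set.mem_insert_iff, Set.mem_singleton_iff]
  constructor
  · rintro ⟨hD, hsub⟩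
    rcases hD with rfl|rfl|rfl
    · tauto
    · exact absurd hsub nsub_Rp_R0
    · tauto
  · rintro (rfl|rfl)
    · exact ⟨by left; rfl, subset_rfl⟩
    · exact ⟨by right; right; rfl, O_sub_R0⟩

lemma fs_B1_Rp : faceSet B1 Rp = {Rp, O} := by
  ext D
  simp only [faceSet, Set.mem_setOf_eq, Set.mem_insert_iff, Set.mem_singleton_iff]
  constructor
  · rintro ⟨hD, hsub⟩
    rcases hD with rfl|rfl|rfl
    · exact absurd hsub nsub_R0_Rp
    · tauto
    · tauto
  · rintro (rfl|rfl)
    · exact ⟨by right; left; rfl, subset_rfl⟩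
    · exact ⟨by right; right; rfl, O_sub_Rp⟩

lemma fs_B2_Rm : faceSet B2 Rm = {Rm, O} := by
  ext D
  simp only [faceSet, Set.mem_setOf_eq, Set.mem_insert_iff, Set.mem_singleton_iff]
  constructor
  · rintro ⟨hD, hsub⟩
    rcases hD with rfl|rfl|rfl
    · exact absurd hsub nsub_R0_Rm
    · tauto
    · tauto
  · rintro (rfl|rfl)
    · exact ⟨by right; left; rfl, subset_rfl⟩
    · exact ⟨by right; right; rfl, O_sub_Rm⟩

lemma fs_ZF_O : faceSet ZF O = {O} := by
  ext D
  simp only [faceSet, Set.mem_setOf_eq, Set.mem_singleton_iff]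
  constructor
  · rintro ⟨hD, _⟩; exact hD
  · rintro rfl; exact ⟨rfl, subset_rfl⟩

lemma fsB1_inter : faceSet B1 R0 ∩ faceSet B1 Rp = {O} := by
  rw [fs_B1_R0, fs_B1_Rp]
  ext D
  simp only [Set.mem_inter_iff, Set.mem_insert_iff, Set.mem_singleton_iff]
  constructor
  · rintro ⟨(rfl|rfl), (h|h)⟩
    · exact absurd h ne_R0_Rp
    · exact absurd h (ne_of_nsub nsub_R0_O)
    · exact absurd h.symm (ne_of_nsub nsub_Rp_O)
    · rfl
  · rintro rfl; exact ⟨by tauto, by tauto⟩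

lemma fsB2_inter : faceSet B2 R0 ∩ faceSet B2 Rm = {O} := by
  rw [fs_B2_R0, fs_B2_Rm]
  ext D
  simp only [Set.mem_inter_iff, Set.mem_insert_iff, Set.mem_singleton_iff]
  constructor
  · rintro ⟨(rfl|rfl), (h|h)⟩
    · exact absurd h ne_R0_Rm
    · exact absurd h (ne_of_nsub nsub_R0_O)
    · exact absurd h.symm (ne_of_nsub nsub_Rm_O)
    · rfl
  · rintro rfl; exact ⟨by tauto, by tauto⟩

lemma biUnion_range_one {α : Type*} (f : ℕ → Set α) : ⋃ i ∈ Finset.range 1, f i = f 0 := by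
  simp

/-- Shelling of ZF -/
lemma shell_ZF : IsShellingAux 0 ZF [O] := by
  refine ⟨by simp, ?_, dim_ZF⟩
  rw [facets_ZF]
  ext C; simp

/-- Shelling of B1 -/
lemma shell_B1 : IsShellingAux 1 B1 [R0, Rp] := by
  refine ⟨by simp [ne_R0_Rp], ?_, Or.inr ⟨⟨ZF, bd_B1_R0.symm, [O], shell_ZF⟩, ?_⟩⟩
  · rw [facets_B1]; ext C; simp
  · intro j hj hj'
    simp only [List.length_cons, List.length_nil] at hj'
    obtain rfl : j = 1 := by omega
    refine ⟨ZF, bd_B1_Rp.symm, [O], shell_ZF, 1, le_rfl, by simp, ?_, ?_⟩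
    · rw [biUnion_range_one]
      rw [show ([R0, Rp].getD 0 ∅) = R0 from rfl, show ([R0, Rp].getD 1 ∅) = Rp from rfl,
        fsB1_inter]
      simp
    · rw [biUnion_range_one, biUnion_range_one]
      rw [show ([R0, Rp].getD 0 ∅) = R0 from rfl, show ([R0, Rp].getD 1 ∅) = Rp from rfl,
        show ([O].getD 0 ∅) = O from rfl]
      rw [fsB1_inter, fs_ZF_O]

/-- Shelling of B2 -/
lemma shell_B2 : IsShellingAux 1 B2 [R0, Rm] := by
  refine ⟨by simp [ne_R0_Rm], ?_, Or.inr ⟨⟨ZF, bd_B2_R0.symm, [O], shell_ZF⟩, ?_⟩⟩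
  · rw [facets_B2]; ext C; simp
  · intro j hj hj'
    simp only [List.length_cons, List.length_nil] at hj'
    obtain rfl : j = 1 := by omega
    refine ⟨ZF, bd_B2_Rm.symm, [O], shell_ZF, 1, le_rfl, by simp, ?_, ?_⟩
    · rw [biUnion_range_one]
      rw [show ([R0, Rm].getD 0 ∅) = R0 from rfl, show ([R0, Rm].getD 1 ∅) = Rm from rfl,
        fsB2_inter]
      simp
    · rw [biUnion_range_one, biUnion_range_one]
      rw [show ([R0, Rm].getD 0 ∅) = R0 from rfl, show ([R0, Rm].getD 1 ∅) = Rm from rfl,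
        show ([O].getD 0 ∅) = O from rfl]
      rw [fsB2_inter, fs_ZF_O]

/-- Shellability of Phi -/
lemma shellable_Phi : IsShellable Phi := by
  refine ⟨[C1, C2], 2, by simp [ne_C1_C2], ?_,
    Or.inr ⟨⟨B1, bd_Phi_C1.symm, [R0, Rp], shell_B1⟩, ?_⟩⟩
  · rw [facets_Phi]; ext C; simp
  · intro j hj hj'
    simp only [List.length_cons, List.length_nil] at hj'
    obtain rfl : j = 1 := by omega
    refine ⟨B2, bd_Phi_C2.symm, [R0, Rm], shell_B2, 1, le_rfl, by simp, ?_, ?_⟩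
    · rw [biUnion_range_one]
      rw [show ([C1, C2].getD 0 ∅) = C1 from rfl, show ([C1, C2].getD 1 ∅) = C2 from rfl,
        fs_inter]
      exact fun h => absurd (h ▸ Set.mem_insert R0 {O}) (Set.notMem_empty R0)
    · rw [biUnion_range_one, biUnion_range_one]
      rw [show ([C1, C2].getD 0 ∅) = C1 from rfl, show ([C1, C2].getD 1 ∅) = C2 from rfl,
        show ([R0, Rm].getD 0 ∅) = R0 from rfl]
      rw [fs_inter, fs_B2_R0]

end S15
/-! ## Part 7: no admissible γ -/

namespace S15

lemma openC1 : IsOpen {x : Fin 2 → ℝ | 0 < x 0 ∧ x 0 < 2 * x 1} := by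
  have h : {x : Fin 2 → ℝ | 0 < x 0 ∧ x 0 < 2 * x 1} =
      {x : Fin 2 → ℝ | 0 < x 0} ∩ {x : Fin 2 → ℝ | x 0 < 2 * x 1} := rfl
  rw [h]
  exact (isOpen_lt continuous_const (continuous_apply 0)).inter
    (isOpen_lt (continuous_apply 0) (continuous_const.mul (continuous_apply 1)))

lemma openC2 : IsOpen {x : Fin 2 → ℝ | x 0 < 0 ∧ -x 0 < 2 * x 1} := by
  have h : {x : Fin 2 → ℝ | x 0 < 0 ∧ -x 0 < 2 * x 1} =
      {x : Fin 2 → ℝ | x 0 < 0} ∩ {x : Fin 2 → ℝ | -x 0 < 2 * x 1} := rfl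
  rw [h]
  exact (isOpen_lt (continuous_apply 0) continuous_const).inter
    (isOpen_lt (continuous_apply 0).neg (continuous_const.mul (continuous_apply 1)))

lemma no_gamma_C1 : ¬ ∃ γ : Fin 2 → ℤ, Z2R γ ∈ C1 ∧
    {D ∈ faceSet Phi C1 | Z2R γ ∈ D} = faceSet Phi C1 \ faceSet Phi C2 ∧
    {a : Fin 2 → ℤ | ∃ D ∈ faceSet Phi C1, Z2R γ ∈ D ∧ Z2R a ∈ relint D} =
      {a : Fin 2 → ℤ | ∃ b : Fin 2 → ℤ, Z2R b ∈ C1 ∧ a = γ + b} := by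
  rintro ⟨γ, hγ, ha, hb⟩
  have hRp : Z2R γ ∈ Rp := by
    have hmem : Rp ∈ {D ∈ faceSet Phi C1 | Z2R γ ∈ D} := by
      rw [ha]
      refine ⟨by rw [fs_Phi_C1]; right; right; left; rfl, ?_⟩
      rw [fs_Phi_C2]
      simp only [Set.mem_insert_iff, Set.mem_singleton_iff]
      push_neg
      exact ⟨ne_of_nsub nsub_Rp_C2, ne_of_nsub nsub_Rp_R0, ne_of_nsub nsub_Rp_Rm,
        ne_of_nsub nsub_Rp_O⟩
    exact hmem.2
  have hO : Z2R γ ∉ O := by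
    intro h
    have hmem : O ∈ {D ∈ faceSet Phi C1 | Z2R γ ∈ D} :=
      ⟨by rw [fs_Phi_C1]; right; right; right; rfl, h⟩
    rw [ha] at hmem
    exact hmem.2 (by rw [fs_Phi_C2]; right; right; right; rfl)
  rw [mem_Rp] at hRp
  simp only [Z2R] at hRp
  have hg0 : γ 0 = 2 * γ 1 := by exact_mod_cast hRp.1
  have hg1 : 0 ≤ γ 1 := by exact_mod_cast hRp.2
  rw [mem_O] at hO
  push_neg at hO
  have hg1' : 1 ≤ γ 1 := by
    rcases eq_or_lt_of_le hg1 with h | h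
    · exfalso
      have h0 : (Z2R γ) 0 = 0 := by
        show ((γ 0 : ℤ) : ℝ) = 0
        rw [hg0, ← h]; norm_num
      exact (hO h0) (by show ((γ 1 : ℤ) : ℝ) = 0; rw [← h]; norm_num)
    · exact h
  have hmem : (![1,1] : Fin 2 → ℤ) ∈
      {a : Fin 2 → ℤ | ∃ D ∈ faceSet Phi C1, Z2R γ ∈ D ∧ Z2R a ∈ relint D} := by
    refine ⟨C1, by rw [fs_Phi_C1]; left; rfl, hγ, ?_⟩
    show Z2R ![1,1] ∈ intrinsicInterior ℝ C1
    apply interior_subset_intrinsicInterior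
    have hsub : {x : Fin 2 → ℝ | 0 < x 0 ∧ x 0 < 2 * x 1} ⊆ C1 := by
      intro x hx; rw [mem_C1]; exact ⟨hx.1.le, hx.2.le⟩
    apply interior_maximal hsub openC1
    constructor <;> norm_num [Z2R]
  rw [hb] at hmem
  obtain ⟨b, hbC, hbe⟩ := hmem
  have h0 : (1:ℤ) = γ 0 + b 0 := by
    have := congrFun hbe 0
    simpa using this
  rw [mem_C1] at hbC
  simp only [Z2R] at hbC
  have hb0 : (0:ℤ) ≤ b 0 := by exact_mod_cast hbC.1
  omega

lemma no_gamma_C2 : ¬ ∃ γ : Fin 2 → ℤ, Z2R γ ∈ C2 ∧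
    {D ∈ faceSet Phi C2 | Z2R γ ∈ D} = faceSet Phi C2 \ faceSet Phi C1 ∧
    {a : Fin 2 → ℤ | ∃ D ∈ faceSet Phi C2, Z2R γ ∈ D ∧ Z2R a ∈ relint D} =
      {a : Fin 2 → ℤ | ∃ b : Fin 2 → ℤ, Z2R b ∈ C2 ∧ a = γ + b} := by
  rintro ⟨γ, hγ, ha, hb⟩
  have hRm : Z2R γ ∈ Rm := by
    have hmem : Rm ∈ {D ∈ faceSet Phi C2 | Z2R γ ∈ D} := by
      rw [ha]
      refine ⟨by rw [fs_Phi_C2]; right; right; left; rfl, ?_⟩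
      rw [fs_Phi_C1]
      simp only [Set.mem_insert_iff, Set.mem_singleton_iff]
      push_neg
      exact ⟨ne_of_nsub nsub_Rm_C1, ne_of_nsub nsub_Rm_R0, ne_of_nsub nsub_Rm_Rp,
        ne_of_nsub nsub_Rm_O⟩
    exact hmem.2
  have hO : Z2R γ ∉ O := by
    intro h
    have hmem : O ∈ {D ∈ faceSet Phi C2 | Z2R γ ∈ D} :=
      ⟨by rw [fs_Phi_C2]; right; right; right; rfl, h⟩
    rw [ha] at hmem
    exact hmem.2 (by rw [fs_Phi_C1]; right; right; right; rfl)
  rw [mem_Rm] at hRm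
  simp only [Z2R] at hRm
  have hg0 : γ 0 = -(2 * γ 1) := by exact_mod_cast hRm.1
  have hg1 : 0 ≤ γ 1 := by exact_mod_cast hRm.2
  rw [mem_O] at hO
  push_neg at hO
  have hg1' : 1 ≤ γ 1 := by
    rcases eq_or_lt_of_le hg1 with h | h
    · exfalso
      have h0 : (Z2R γ) 0 = 0 := by
        show ((γ 0 : ℤ) : ℝ) = 0
        rw [hg0, ← h]; norm_num
      exact (hO h0) (by show ((γ 1 : ℤ) : ℝ) = 0; rw [← h]; norm_num)
    · exact h
  have hmem : (![-1,1] : Fin 2 → ℤ) ∈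
      {a : Fin 2 → ℤ | ∃ D ∈ faceSet Phi C2, Z2R γ ∈ D ∧ Z2R a ∈ relint D} := by
    refine ⟨C2, by rw [fs_Phi_C2]; left; rfl, hγ, ?_⟩
    show Z2R ![-1,1] ∈ intrinsicInterior ℝ C2
    apply interior_subset_intrinsicInterior
    have hsub : {x : Fin 2 → ℝ | x 0 < 0 ∧ -x 0 < 2 * x 1} ⊆ C2 := by
      intro x hx; rw [mem_C2]; exact ⟨hx.1.le, hx.2.le⟩
    apply interior_maximal hsub openC2
    constructor <;> norm_num [Z2R]
  rw [hb] at hmem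
  obtain ⟨b, hbC, hbe⟩ := hmem
  have h0 : (-1:ℤ) = γ 0 + b 0 := by
    have := congrFun hbe 0
    simpa using this
  rw [mem_C2] at hbC
  simp only [Z2R] at hbC
  have hb0 : b 0 ≤ (0:ℤ) := by exact_mod_cast hbC.1
  omega

end S15
/-! ## Part 8: the two monoid algebra projections -/

namespace S15

abbrev V2 := Fin 2 → ℤ

lemma int_eq_zero_iff (a : V2) : a = 0 ↔ a 0 = 0 ∧ a 1 = 0 := by
  constructor
  · rintro rfl; simp
  · rintro ⟨h0, h1⟩; funext i; fin_cases i <;> simpa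

def M1 : AddSubmonoid V2 where
  carrier := {a | 0 ≤ a 0 ∧ a 0 ≤ 2 * a 1}
  zero_mem' := by simp
  add_mem' := by
    intro a b ha hb
    exact ⟨by simpa using add_nonneg ha.1 hb.1, by
      simp only [Set.mem_setOf_eq, Pi.add_apply] at *; omega⟩

def M2 : AddSubmonoid V2 where
  carrier := {a | a 0 ≤ 0 ∧ -a 0 ≤ 2 * a 1}
  zero_mem' := by simp
  add_mem' := by
    intro a b ha hb
    simp only [Set.mem_setOf_eq, Pi.add_apply] at *
    omega

lemma mem_M1 (a : V2) : a ∈ M1 ↔ 0 ≤ a 0 ∧ a 0 ≤ 2 * a 1 := Iff.rfl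
lemma mem_M2 (a : V2) : a ∈ M2 ↔ a 0 ≤ 0 ∧ -a 0 ≤ 2 * a 1 := Iff.rfl

lemma Z2R_C1 (a : V2) : Z2R a ∈ C1 ↔ a ∈ M1 := by
  rw [mem_C1, mem_M1]
  simp only [Z2R]
  constructor <;> rintro ⟨h1, h2⟩ <;> constructor
  · exact_mod_cast h1
  · exact_mod_cast h2
  · exact_mod_cast h1
  · exact_mod_cast h2

lemma Z2R_C2 (a : V2) : Z2R a ∈ C2 ↔ a ∈ M2 := by
  rw [mem_C2, mem_M2]
  simp only [Z2R]
  constructor <;> rintro ⟨h1, h2⟩ <;> constructor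
  · exact_mod_cast h1
  · exact_mod_cast h2
  · exact_mod_cast h1
  · exact_mod_cast h2

lemma Z2R_add (a b : V2) : Z2R (a + b) = Z2R a + Z2R b := by
  funext i; simp [Z2R]

lemma Z2R_zero : Z2R (0 : V2) = 0 := by funext i; simp [Z2R]

lemma cc_of_mem {C : Set (Fin 2 → ℝ)} (hC : C ∈ Phi.cones) : IsConvexCone C := by
  rcases hC with rfl|rfl|rfl|rfl|rfl|rfl
  exacts [cc_C1, cc_C2, cc_R0, cc_Rp, cc_Rm, cc_O]

lemma sub_C1C2_of_mem {C : Set (Fin 2 → ℝ)} (hC : C ∈ Phi.cones) : C ⊆ C1 ∪ C2 := by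
  rcases hC with rfl|rfl|rfl|rfl|rfl|rfl
  · exact Set.subset_union_left
  · exact Set.subset_union_right
  · exact R0_sub_C1.trans Set.subset_union_left
  · exact Rp_sub_C1.trans Set.subset_union_left
  · exact Rm_sub_C2.trans Set.subset_union_right
  · exact (O_sub cc_C1).trans Set.subset_union_left

lemma mem_supp' (a : V2) : a ∈ Phi.supp ↔ a ∈ M1 ∨ a ∈ M2 := by
  constructor
  · rintro ⟨C, hC, haC⟩
    rcases sub_C1C2_of_mem hC haC with h | h
    · exact Or.inl ((Z2R_C1 a).1 h)
    · exact Or.inr ((Z2R_C2 a).1 h)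
  · rintro (h | h)
    · exact ⟨C1, C1_mem, (Z2R_C1 a).2 h⟩
    · exact ⟨C2, C2_mem, (Z2R_C2 a).2 h⟩

lemma face_split {C : Set (Fin 2 → ℝ)} (hC : C ∈ Phi.cones) {x y : Fin 2 → ℝ}
    (hx : x ∈ C) (hy : y ∈ C) {D : Set (Fin 2 → ℝ)} (hD : D ∈ Phi.cones)
    (hxy : x + y ∈ D) : x ∈ D ∧ y ∈ D := by
  have hface := (Phi.inter_face C hC D hD).1
  have hsum : x + y ∈ C ∩ D := ⟨(cc_of_mem hC).2.1 x hx y hy, hxy⟩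
  have := hface.2.2 x hx y hy hsum
  exact ⟨this.1.2, this.2.2⟩

/-- hypotheses bundle for a facet submonoid -/
structure FacetData (M : AddSubmonoid V2) : Prop where
  hsupp : ∀ a : V2, a ∈ M → a ∈ Phi.supp
  hsplit : ∀ a b : V2, (∃ C ∈ Phi.cones, Z2R a ∈ C ∧ Z2R b ∈ C) → a + b ∈ M → a ∈ M ∧ b ∈ M
  hcompat : ∀ a b : V2, a ∈ M → b ∈ M → ∃ C ∈ Phi.cones, Z2R a ∈ C ∧ Z2R b ∈ C

lemma facetData_M1 : FacetData M1 where
  hsupp a h := (mem_supp' a).2 (Or.inl h)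
  hsplit a b h hab := by
    obtain ⟨C, hC, haC, hbC⟩ := h
    have := face_split hC haC hbC C1_mem (by rw [← Z2R_add]; exact (Z2R_C1 _).2 hab)
    exact ⟨(Z2R_C1 a).1 this.1, (Z2R_C1 b).1 this.2⟩
  hcompat a b ha hb := ⟨C1, C1_mem, (Z2R_C1 a).2 ha, (Z2R_C1 b).2 hb⟩

lemma facetData_M2 : FacetData M2 where
  hsupp a h := (mem_supp' a).2 (Or.inr h)
  hsplit a b h hab := by
    obtain ⟨C, hC, haC, hbC⟩ := h
    have := face_split hC haC hbC C2_mem (by rw [← Z2R_add]; exact (Z2R_C2 _).2 hab)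
    exact ⟨(Z2R_C2 a).1 this.1, (Z2R_C2 b).1 this.2⟩
  hcompat a b ha hb := ⟨C2, C2_mem, (Z2R_C2 a).2 ha, (Z2R_C2 b).2 hb⟩

section TFR

variable (K : Type) [Field K]

/-- the truncated monomial in the target monoid algebra -/
noncomputable def xp (M : AddSubmonoid V2) (a : V2) : AddMonoidAlgebra K ↥M :=
  if h : a ∈ M then AddMonoidAlgebra.single (⟨a, h⟩ : ↥M) (1 : K) else 0

variable (M : AddSubmonoid V2)

lemma xp_mem {a : V2} (h : a ∈ M) : xp K M a = AddMonoidAlgebra.single (⟨a, h⟩ : ↥M) (1 : K) :=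
  dif_pos h

lemma xp_not_mem {a : V2} (h : a ∉ M) : xp K M a = 0 := dif_neg h

lemma xp_zero : xp K M 0 = 1 := by
  rw [xp_mem K M (zero_mem M)]
  rfl

lemma xp_mul_of_mem {a b : V2} (ha : a ∈ M) (hb : b ∈ M) :
    xp K M a * xp K M b = xp K M (a + b) := by
  rw [xp_mem K M ha, xp_mem K M hb, xp_mem K M (add_mem ha hb),
    AddMonoidAlgebra.single_mul_single, one_mul]
  rfl

/-- the monoid homomorphism from the free commutative monoid -/
noncomputable def pre : Multiplicative (↥Phi.supp →₀ ℕ) →* AddMonoidAlgebra K ↥M where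
  toFun f := (Multiplicative.toAdd f).prod fun m k => (xp K M (m : V2)) ^ k
  map_one' := by
    show (0 : ↥Phi.supp →₀ ℕ).prod _ = 1
    exact Finsupp.prod_zero_index
  map_mul' f g := by
    show (Multiplicative.toAdd f + Multiplicative.toAdd g).prod _ = _
    exact Finsupp.prod_add_index' (fun a => pow_zero _) (fun a b c => pow_add _ _ _)

noncomputable def phiAux : Phi.polyRing K →ₐ[K] AddMonoidAlgebra K ↥M :=
  AddMonoidAlgebra.lift K _ _ (pre K M)

lemma phiAux_X (m : ↥Phi.supp) : phiAux K M (Phi.X K m) = xp K M (m : V2) := by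
  rw [Fan.X, phiAux, AddMonoidAlgebra.lift_single, one_smul]
  show (Finsupp.single m 1).prod (fun a k => (xp K M (a : V2)) ^ k) = _
  have h : (Finsupp.single m 1).prod (fun a k => (xp K M (a : V2)) ^ k)
      = (xp K M (m : V2)) ^ 1 := Finsupp.prod_single_index (pow_zero _)
  rw [h, pow_one]

lemma phiAux_Xaux (hM : FacetData M) (a : V2) :
    phiAux K M (Phi.Xaux K a) = xp K M a := by
  rw [Fan.Xaux]
  split_ifs with h
  · exact phiAux_X K M _
  · rw [map_zero, xp_not_mem]
    intro hc
    exact h (hM.hsupp a hc)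

lemma phiAux_vanish (hM : FacetData M) :
    ∀ z ∈ Phi.relIdeal K, phiAux K M z = 0 := by
  intro z hz
  have hle : Phi.relIdeal K ≤ RingHom.ker (phiAux K M).toRingHom := by
    rw [Fan.relIdeal, Ideal.span_le]
    rintro z (( ⟨a, b, hab, rfl⟩ | ⟨a, b, hab, rfl⟩ ) | ⟨a, ha, rfl⟩)
    · -- compatible pair
      simp only [SetLike.mem_coe, RingHom.mem_ker, AlgHom.toRingHom_eq_coe,
        RingHom.coe_coe, map_sub, map_mul]
      rw [phiAux_X, phiAux_X, phiAux_Xaux K M hM]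
      by_cases haM : (a : V2) ∈ M
      · by_cases hbM : (b : V2) ∈ M
        · rw [xp_mul_of_mem K M haM hbM, sub_self]
        · rw [xp_not_mem K M hbM, mul_zero, xp_not_mem, sub_self]
          intro hc
          exact hbM (hM.hsplit a b hab hc).2
      · rw [xp_not_mem K M haM, zero_mul, xp_not_mem, sub_self]
        intro hc
        exact haM (hM.hsplit a b hab hc).1
    · -- incompatible pair
      simp only [SetLike.mem_coe, RingHom.mem_ker, AlgHom.toRingHom_eq_coe,
        RingHom.coe_coe, map_mul]
      rw [phiAux_X, phiAux_X]
      by_cases haM : (a : V2) ∈ M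
      · by_cases hbM : (b : V2) ∈ M
        · exact absurd (hM.hcompat a b haM hbM) hab
        · rw [xp_not_mem K M hbM, mul_zero]
      · rw [xp_not_mem K M haM, zero_mul]
    · -- unit
      simp only [SetLike.mem_coe, RingHom.mem_ker, AlgHom.toRingHom_eq_coe,
        RingHom.coe_coe, map_sub, map_one]
      rw [phiAux_X]
      have : (a : V2) = 0 := ha
      rw [this, xp_zero, sub_self]
  exact hle hz

/-- The projection to the facet monoid algebra. -/
noncomputable def phiM (hM : FacetData M) : ToricFaceRing K Phi →ₐ[K] AddMonoidAlgebra K ↥M :=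
  Ideal.Quotient.liftₐ _ (phiAux K M) (phiAux_vanish K M hM)

lemma phiM_mk (hM : FacetData M) (f : Phi.polyRing K) :
    phiM K M hM (Ideal.Quotient.mk (Phi.relIdeal K) f) = phiAux K M f := by
  rw [phiM]
  exact (Ideal.Quotient.liftₐ_apply _ _ _ _).trans (Ideal.Quotient.lift_mk _ _ _)

lemma phiM_xpow (hM : FacetData M) (a : V2) :
    phiM K M hM (xpow K Phi a) = xp K M a := by
  rw [xpow, phiM_mk, phiAux_Xaux K M hM]

end TFR

end S15
/-! ## Part 9: spanning and injectivity -/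

namespace S15

instance uniqueSums_sub (M : AddSubmonoid V2) : UniqueSums ↥M :=
  UniqueSums.of_injective_addHom M.subtype.toAddHom Subtype.val_injective inferInstance

section TFR2

variable (K : Type) [Field K]

lemma zero_mem_supp : (0 : V2) ∈ Phi.supp := (mem_supp' 0).2 (Or.inl (zero_mem M1))

lemma xpow_not_supp {a : V2} (h : a ∉ Phi.supp) : xpow K Phi a = 0 := by
  rw [xpow, Fan.Xaux, dif_neg h, map_zero]; rfl

lemma xpow_supp {a : V2} (h : a ∈ Phi.supp) :
    xpow K Phi a = Ideal.Quotient.mk (Phi.relIdeal K) (Phi.X K ⟨a, h⟩) := by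
  rw [xpow, Fan.Xaux, dif_pos h]

lemma xpow_zero' : xpow K Phi 0 = 1 := by
  rw [xpow_supp K zero_mem_supp]
  have hgen : Phi.X K ⟨0, zero_mem_supp⟩ - 1 ∈ Phi.relIdeal K := by
    apply Ideal.subset_span
    exact Or.inr ⟨⟨0, zero_mem_supp⟩, rfl, rfl⟩
  have h := Ideal.Quotient.eq_zero_iff_mem.2 hgen
  rw [map_sub, map_one, sub_eq_zero] at h
  exact h

lemma xpow_mul' (a b : V2) :
    xpow K Phi a * xpow K Phi b = xpow K Phi (a + b) ∨ xpow K Phi a * xpow K Phi b = 0 := by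
  by_cases ha : a ∈ Phi.supp
  · by_cases hb : b ∈ Phi.supp
    · by_cases hcom : ∃ C ∈ Phi.cones, Z2R a ∈ C ∧ Z2R b ∈ C
      · left
        rw [xpow_supp K ha, xpow_supp K hb, xpow]
        show Ideal.Quotient.mk (Phi.relIdeal K) _ * Ideal.Quotient.mk (Phi.relIdeal K) _ = _
        rw [← map_mul (Ideal.Quotient.mk (Phi.relIdeal K))]
        have hgen : Phi.X K ⟨a, ha⟩ * Phi.X K ⟨b, hb⟩ - Phi.Xaux K (a + b) ∈ Phi.relIdeal K := by
          apply Ideal.subset_span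
          exact Or.inl (Or.inl ⟨⟨a, ha⟩, ⟨b, hb⟩, hcom, rfl⟩)
        have h := Ideal.Quotient.eq_zero_iff_mem.2 hgen
        rw [map_sub, sub_eq_zero] at h
        exact h
      · right
        rw [xpow_supp K ha, xpow_supp K hb]
        show Ideal.Quotient.mk (Phi.relIdeal K) _ * Ideal.Quotient.mk (Phi.relIdeal K) _ = _
        rw [← map_mul (Ideal.Quotient.mk (Phi.relIdeal K))]
        apply Ideal.Quotient.eq_zero_iff_mem.2
        apply Ideal.subset_span
        exact Or.inl (Or.inr ⟨⟨a, ha⟩, ⟨b, hb⟩, hcom, rfl⟩)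
    · right; rw [xpow_not_supp K hb, mul_zero]
  · right; rw [xpow_not_supp K ha, zero_mul]

lemma span_xpow : Submodule.span K (Set.range (xpow K Phi)) = ⊤ := by
  set W := Submodule.span K (Set.range (xpow K Phi)) with hW
  have hone : (1 : ToricFaceRing K Phi) ∈ W := by
    rw [← xpow_zero' K]
    exact Submodule.subset_span ⟨0, rfl⟩
  have hmulW : ∀ (a : V2), ∀ w ∈ W, xpow K Phi a * w ∈ W := by
    intro a w hw
    induction hw using Submodule.span_induction with
    | mem x hx =>
      obtain ⟨b, rfl⟩ := hx
      rcases xpow_mul' K a b with h | h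
      · rw [h]; exact Submodule.subset_span ⟨a + b, rfl⟩
      · rw [h]; exact zero_mem W
    | zero => rw [mul_zero]; exact zero_mem W
    | add x y _ _ hx hy => rw [mul_add]; exact add_mem hx hy
    | smul c x _ hx => rw [mul_smul_comm]; exact Submodule.smul_mem W c hx
  have hpowW : ∀ (a : V2) (b : ℕ), ∀ w ∈ W, (xpow K Phi a) ^ b * w ∈ W := by
    intro a b
    induction b with
    | zero => intro w hw; rw [pow_zero, one_mul]; exact hw
    | succ b ih =>
      intro w hw
      rw [pow_succ, mul_comm (xpow K Phi a ^ b) (xpow K Phi a), mul_assoc]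
      exact hmulW a _ (ih w hw)
  have hMono : ∀ g : ↥Phi.supp →₀ ℕ,
      Ideal.Quotient.mk (Phi.relIdeal K) (AddMonoidAlgebra.single g (1 : K)) ∈ W := by
    intro g
    induction g using Finsupp.induction with
    | zero =>
      rw [show AddMonoidAlgebra.single (0 : ↥Phi.supp →₀ ℕ) (1 : K) = (1 : Phi.polyRing K)
        from AddMonoidAlgebra.one_def.symm, map_one]
      exact hone
    | single_add m b g' hmg hb ih =>
      have hsplit : (AddMonoidAlgebra.single (Finsupp.single m b + g') (1 : K)) =
          AddMonoidAlgebra.single (Finsupp.single m b) (1 : K) *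
            AddMonoidAlgebra.single g' (1 : K) := by
        rw [AddMonoidAlgebra.single_mul_single, one_mul]
      have hpow : (AddMonoidAlgebra.single (Finsupp.single m b) (1 : K)) =
          (AddMonoidAlgebra.single (Finsupp.single m 1) (1 : K)) ^ b := by
        rw [AddMonoidAlgebra.single_pow, one_pow, Finsupp.smul_single, smul_eq_mul, mul_one]
      rw [hsplit, hpow, map_mul, map_pow]
      have hX : Ideal.Quotient.mk (Phi.relIdeal K)
          (AddMonoidAlgebra.single (Finsupp.single m 1) (1 : K)) = xpow K Phi (m : V2) := by
        rw [xpow_supp K m.2]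
        rfl
      rw [hX]
      exact hpowW _ b _ ih
  rw [eq_top_iff]
  intro z _
  obtain ⟨f, rfl⟩ := Ideal.Quotient.mk_surjective z
  induction f using AddMonoidAlgebra.induction with
  | zero =>
    rw [map_zero]
    exact zero_mem W
  | single_add g c f' hgf hc ih =>
    have hthis : Ideal.Quotient.mk (Phi.relIdeal K) (AddMonoidAlgebra.single g c) =
        c • Ideal.Quotient.mk (Phi.relIdeal K) (AddMonoidAlgebra.single g (1 : K)) := by
      have h1 : (AddMonoidAlgebra.single g c : Phi.polyRing K) =
          c • AddMonoidAlgebra.single g (1 : K) := by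
        rw [AddMonoidAlgebra.smul_single', mul_one]
      rw [h1, ← Ideal.Quotient.mkₐ_eq_mk (R₁ := K), map_smul]
    show Ideal.Quotient.mk (Phi.relIdeal K) (AddMonoidAlgebra.single g c + f') ∈ W
    rw [map_add, hthis]
    exact add_mem (Submodule.smul_mem W c (hMono g)) (ih Submodule.mem_top)

end TFR2

end S15
/-! ## Part 10: injectivity and the two minimal primes -/

namespace S15

section TFR3

variable (K : Type) [Field K]

noncomputable abbrev phi1 := phiM K M1 facetData_M1
noncomputable abbrev phi2 := phiM K M2 facetData_M2

lemma coeff_linComb (M : AddSubmonoid V2) (hM : FacetData M) (b : ↥M) (c : V2 →₀ K) :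
    (phiM K M hM (Finsupp.linearCombination K (xpow K Phi) c)).coeff b = c (b : V2) := by
  rw [Finsupp.linearCombination_apply, Finsupp.sum, map_sum]
  have h1 : ∀ a ∈ c.support, phiM K M hM (c a • xpow K Phi a) = c a • xp K M a := by
    intro a _
    rw [map_smul, phiM_xpow]
  rw [Finset.sum_congr rfl h1, AddMonoidAlgebra.coeff_sum, Finsupp.finset_sum_apply]
  have h2 : ∀ a ∈ c.support, (c a • xp K M a).coeff b = if a = (b : V2) then c a else 0 := by
    intro a _
    rw [AddMonoidAlgebra.coeff_smul_apply]
    by_cases haM : a ∈ M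
    · rw [xp_mem K M haM, AddMonoidAlgebra.coeff_single, Finsupp.single_apply]
      by_cases he : a = (b : V2)
      · rw [if_pos (Subtype.ext he), if_pos he, smul_eq_mul, mul_one]
      · rw [if_neg (fun hc => he (congrArg Subtype.val hc)), if_neg he, smul_zero]
    · rw [xp_not_mem K M haM, if_neg (fun hc => haM (by rw [hc]; exact b.2)), AddMonoidAlgebra.coeff_zero, Finsupp.zero_apply, smul_zero]
  rw [Finset.sum_congr rfl h2, Finset.sum_ite_eq' c.support ((b : V2)) (fun a => c a)]
  split_ifs with h
  · rfl
  · exact (Finsupp.notMem_support_iff.1 h).symm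

lemma psi_inj (z : ToricFaceRing K Phi) (h1 : phi1 K z = 0) (h2 : phi2 K z = 0) : z = 0 := by
  have hz : z ∈ LinearMap.range (Finsupp.linearCombination K (xpow K Phi)) := by
    rw [Finsupp.range_linearCombination, span_xpow]
    trivial
  obtain ⟨c, rfl⟩ := hz
  rw [Finsupp.linearCombination_apply, Finsupp.sum]
  apply Finset.sum_eq_zero
  intro a ha
  by_cases hM1 : a ∈ M1
  · have := coeff_linComb K M1 facetData_M1 ⟨a, hM1⟩ c
    rw [h1, AddMonoidAlgebra.coeff_zero, Finsupp.zero_apply] at this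
    rw [← this, zero_smul]
  · by_cases hM2 : a ∈ M2
    · have := coeff_linComb K M2 facetData_M2 ⟨a, hM2⟩ c
      rw [h2, AddMonoidAlgebra.coeff_zero, Finsupp.zero_apply] at this
      rw [← this, zero_smul]
    · rw [xpow_not_supp K (fun hc => (by
        rcases (mem_supp' a).1 hc with h | h
        exacts [hM1 h, hM2 h])), smul_zero]

noncomputable def P1 : Ideal (ToricFaceRing K Phi) := RingHom.ker (phi1 K).toRingHom
noncomputable def P2 : Ideal (ToricFaceRing K Phi) := RingHom.ker (phi2 K).toRingHom

instance domMA (M : AddSubmonoid V2) : IsDomain (AddMonoidAlgebra K ↥M) :=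
  NoZeroDivisors.to_isDomain _

lemma P1_prime : (P1 K).IsPrime := RingHom.ker_isPrime _
lemma P2_prime : (P2 K).IsPrime := RingHom.ker_isPrime _

lemma mem_P1_iff (z : ToricFaceRing K Phi) : z ∈ P1 K ↔ phi1 K z = 0 := Iff.rfl
lemma mem_P2_iff (z : ToricFaceRing K Phi) : z ∈ P2 K ↔ phi2 K z = 0 := Iff.rfl

/-- lattice points -/
def a11 : V2 := ![1, 1]
def a21 : V2 := ![2, 1]
def am11 : V2 := ![-1, 1]
def am21 : V2 := ![-2, 1]

lemma a11_M1 : a11 ∈ M1 := by constructor <;> norm_num [a11, mem_M1]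
lemma a21_M1 : a21 ∈ M1 := by constructor <;> norm_num [a21, mem_M1]
lemma am11_M2 : am11 ∈ M2 := by constructor <;> norm_num [am11, mem_M2]
lemma am21_M2 : am21 ∈ M2 := by constructor <;> norm_num [am21, mem_M2]
lemma a11_nM2 : a11 ∉ M2 := by intro h; have := h.1; norm_num [a11] at this
lemma a21_nM2 : a21 ∉ M2 := by intro h; have := h.1; norm_num [a21] at this
lemma am11_nM1 : am11 ∉ M1 := by intro h; have := h.1; norm_num [am11] at this
lemma am21_nM1 : am21 ∉ M1 := by intro h; have := h.1; norm_num [am21] at this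

lemma xpow_a11_P2 : xpow K Phi a11 ∈ P2 K := by
  rw [mem_P2_iff, phiM_xpow, xp_not_mem K M2 a11_nM2]
lemma xpow_a21_P2 : xpow K Phi a21 ∈ P2 K := by
  rw [mem_P2_iff, phiM_xpow, xp_not_mem K M2 a21_nM2]
lemma xpow_am11_P1 : xpow K Phi am11 ∈ P1 K := by
  rw [mem_P1_iff, phiM_xpow, xp_not_mem K M1 am11_nM1]
lemma xpow_am21_P1 : xpow K Phi am21 ∈ P1 K := by
  rw [mem_P1_iff, phiM_xpow, xp_not_mem K M1 am21_nM1]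

lemma xpow_a11_nP1 : xpow K Phi a11 ∉ P1 K := by
  rw [mem_P1_iff, phiM_xpow, xp_mem K M1 a11_M1]
  exact fun hc => one_ne_zero (AddMonoidAlgebra.single_eq_zero.1 hc)
lemma xpow_am11_nP2 : xpow K Phi am11 ∉ P2 K := by
  rw [mem_P2_iff, phiM_xpow, xp_mem K M2 am11_M2]
  exact fun hc => one_ne_zero (AddMonoidAlgebra.single_eq_zero.1 hc)

lemma not_le_P1_P2 : ¬ P1 K ≤ P2 K := fun h => xpow_am11_nP2 K (h (xpow_am11_P1 K))
lemma not_le_P2_P1 : ¬ P2 K ≤ P1 K := fun h => xpow_a11_nP1 K (h (xpow_a11_P2 K))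

lemma P_mul_zero : ∀ x ∈ P1 K, ∀ y ∈ P2 K, x * y = 0 := by
  intro x hx y hy
  apply psi_inj
  · rw [map_mul, (mem_P1_iff K x).1 hx, zero_mul]
  · rw [map_mul, (mem_P2_iff K y).1 hy, mul_zero]

instance : Nontrivial (ToricFaceRing K Phi) := by
  refine ⟨1, 0, fun h => ?_⟩
  have h1 : phi1 K 1 = 1 := map_one _
  rw [h, map_zero] at h1
  exact one_ne_zero h1.symm

lemma prime_ge (q : Ideal (ToricFaceRing K Phi)) (hq : q.IsPrime) :
    P1 K ≤ q ∨ P2 K ≤ q := by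
  apply (Ideal.IsPrime.mul_le hq).1
  refine Ideal.mul_le.2 fun r hr s hs => ?_
  rw [P_mul_zero K r hr s hs]
  exact q.zero_mem

lemma minPrimes : minimalPrimes (ToricFaceRing K Phi) = {P1 K, P2 K} := by
  rw [minimalPrimes_eq_minimals]
  ext q
  simp only [Set.mem_setOf_eq, Set.mem_insert_iff, Set.mem_singleton_iff]
  constructor
  · rintro ⟨hq, hqmin⟩
    rcases prime_ge K q hq with h | h
    · exact Or.inl (le_antisymm (hqmin (P1_prime K) h) h)
    · exact Or.inr (le_antisymm (hqmin (P2_prime K) h) h)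
  · rintro (rfl | rfl)
    · refine ⟨P1_prime K, fun y hy hyle => ?_⟩
      rcases prime_ge K y hy with h | h
      · exact h
      · exact absurd (h.trans hyle) (not_le_P2_P1 K)
    · refine ⟨P2_prime K, fun y hy hyle => ?_⟩
      rcases prime_ge K y hy with h | h
      · exact absurd (h.trans hyle) (not_le_P1_P2 K)
      · exact h

end TFR3

end S15
/-! ## Part 11: filtration step lemmas and the monomial argument -/

namespace S15

lemma lemA {R₀ : Type} [CommRing R₀] {N N' : Submodule R₀ R₀} {p : Ideal R₀}
    (e : (↥N' ⧸ Submodule.comap N'.subtype N) ≃ₗ[R₀] (R₀ ⧸ p)) :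
    ∃ u : R₀, u ∈ N' ∧ (∀ r : R₀, r * u ∈ N ↔ r ∈ p) ∧
      ∀ w ∈ N', ∃ r : R₀, w - r * u ∈ N := by
  set Q := Submodule.comap N'.subtype N with hQ
  obtain ⟨u', hu'⟩ := Submodule.Quotient.mk_surjective Q
    (e.symm (Submodule.Quotient.mk (1 : R₀)))
  have hsmul1 : ∀ r : R₀, r • (Submodule.Quotient.mk (1 : R₀) : R₀ ⧸ p) =
      Submodule.Quotient.mk r := by
    intro r
    rw [← Submodule.Quotient.mk_smul, smul_eq_mul, mul_one]
  have hch : ∀ r : R₀, (Submodule.Quotient.mk (r • u') : ↥N' ⧸ Q) =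
      e.symm (Submodule.Quotient.mk r) := by
    intro r
    rw [Submodule.Quotient.mk_smul, hu', ← map_smul, hsmul1]
  refine ⟨u', u'.2, ?_, ?_⟩
  · intro r
    have hmem : r * (u' : R₀) ∈ N ↔ r • u' ∈ Q := by
      rw [hQ, Submodule.mem_comap]
      constructor
      · intro h; simpa [smul_eq_mul] using h
      · intro h; simpa [smul_eq_mul] using h
    rw [hmem, ← Submodule.Quotient.mk_eq_zero, hch r,
      LinearEquiv.map_eq_zero_iff, Submodule.Quotient.mk_eq_zero]
  · intro w hw
    obtain ⟨r, hr⟩ := Ideal.Quotient.mk_surjective (I := p)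
      (e (Submodule.Quotient.mk (⟨w, hw⟩ : ↥N')))
    refine ⟨r, ?_⟩
    have hz : (Submodule.Quotient.mk ((⟨w, hw⟩ : ↥N') - r • u') : ↥N' ⧸ Q) = 0 := by
      rw [Submodule.Quotient.mk_sub, hch r]
      have : (Submodule.Quotient.mk r : R₀ ⧸ p) = e (Submodule.Quotient.mk (⟨w, hw⟩ : ↥N')) := hr
      rw [this, LinearEquiv.symm_apply_apply, sub_self]
    rw [Submodule.Quotient.mk_eq_zero, hQ, Submodule.mem_comap] at hz
    simpa [smul_eq_mul] using hz

lemma lemTop {R₀ : Type} [CommRing R₀] {N N' : Submodule R₀ R₀} {p : Ideal R₀}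
    (hp : p.IsPrime) (hone : (1 : R₀) ∈ N') (hle : N ≤ N')
    (e : (↥N' ⧸ Submodule.comap N'.subtype N) ≃ₗ[R₀] (R₀ ⧸ p)) :
    N = p := by
  set Q := Submodule.comap N'.subtype N with hQ
  obtain ⟨s, hs⟩ := Submodule.Quotient.mk_surjective p
    (e (Submodule.Quotient.mk (⟨1, hone⟩ : ↥N')))
  have key : ∀ w : R₀, ∀ hw : w ∈ N', (w ∈ N ↔ w * s ∈ p) := by
    intro w hw
    have h1 : (⟨w, hw⟩ : ↥N') = w • (⟨1, hone⟩ : ↥N') := by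
      apply Subtype.ext
      simp [smul_eq_mul]
    have h2 : e (Submodule.Quotient.mk (⟨w, hw⟩ : ↥N')) =
        Submodule.Quotient.mk (w * s) := by
      rw [h1, Submodule.Quotient.mk_smul, map_smul, ← hs, ← Submodule.Quotient.mk_smul,
        smul_eq_mul]
    have h3 : w ∈ N ↔ (Submodule.Quotient.mk (⟨w, hw⟩ : ↥N') : ↥N' ⧸ Q) = 0 := by
      rw [Submodule.Quotient.mk_eq_zero, hQ, Submodule.mem_comap]
      constructor
      · intro h; simpa using h
      · intro h; simpa using h
    rw [h3, ← LinearEquiv.map_eq_zero_iff e, h2, Submodule.Quotient.mk_eq_zero]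
  by_cases hsp : s ∈ p
  · exfalso
    have h1N : (1 : R₀) ∈ N := (key 1 hone).2 (by rw [one_mul]; exact hsp)
    have hNN' : ∀ y : R₀, y ∈ N' → y ∈ N := by
      intro y hy
      exact (key y hy).2 (Ideal.mul_mem_left p y hsp)
    obtain ⟨x, hx⟩ := Submodule.Quotient.mk_surjective Q
      (e.symm (Submodule.Quotient.mk (1 : R₀)))
    have hx0 : (Submodule.Quotient.mk x : ↥N' ⧸ Q) = 0 := by
      rw [Submodule.Quotient.mk_eq_zero, hQ, Submodule.mem_comap]
      simpa using hNN' x x.2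
    rw [hx0] at hx
    have : (Submodule.Quotient.mk (1 : R₀) : R₀ ⧸ p) = 0 := by
      have := congrArg e hx.symm
      rwa [LinearEquiv.apply_symm_apply, map_zero] at this
    rw [Submodule.Quotient.mk_eq_zero] at this
    exact hp.ne_top ((Ideal.eq_top_iff_one p).2 this)
  · ext w
    constructor
    · intro hwN
      have h := (key w (hle hwN)).1 hwN
      exact (hp.mem_or_mem h).resolve_right hsp
    · intro hwp
      have hwN' : w ∈ N' := by simpa using N'.smul_mem w hone
      exact (key w hwN').2 (Ideal.mul_mem_right s p hwp)

lemma mul_coeff_key {K : Type} [Field K] (M : AddSubmonoid V2)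
    (hpos : ∀ a : V2, a ∈ M → 0 ≤ a 1 ∧ (a 1 = 0 → a = 0))
    (w : AddMonoidAlgebra K ↥M) (hw : ∀ b : ↥M, w.coeff b ≠ 0 → 1 ≤ (b : V2) 1)
    (f : AddMonoidAlgebra K ↥M) (x : ↥M) (hx : (x : V2) 1 = 1) :
    (f * w).coeff x = f.coeff 0 * w.coeff x := by
  classical
  rw [AddMonoidAlgebra.coeff_mul, Finsupp.sum]
  rw [Finset.sum_eq_single (0 : ↥M)]
  · rw [Finsupp.sum]
    have h1 : ∀ a₂ ∈ w.coeff.support,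
        (if (0 : ↥M) + a₂ = x then f.coeff 0 * w.coeff a₂ else 0) =
          (if a₂ = x then f.coeff 0 * w.coeff a₂ else 0) := by
      intro a₂ _
      rw [zero_add]
    rw [Finset.sum_congr rfl h1, Finset.sum_ite_eq' w.coeff.support x (fun a₂ => f.coeff 0 * w.coeff a₂)]
    split_ifs with h
    · rfl
    · rw [Finsupp.notMem_support_iff.1 h, mul_zero]
  · intro a₁ ha₁ hne
    rw [Finsupp.sum]
    apply Finset.sum_eq_zero
    intro a₂ ha₂
    rw [if_neg]
    intro hc
    have hco : (a₁ : V2) 1 + (a₂ : V2) 1 = (x : V2) 1 := by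
      have := congrArg (fun y : ↥M => (y : V2) 1) hc
      simpa using this
    have h2 := hw a₂ (Finsupp.mem_support_iff.1 ha₂)
    have h3 := (hpos _ a₁.2).1
    have h4 : (a₁ : V2) 1 = 0 := by omega
    exact hne (Subtype.ext ((hpos _ a₁.2).2 h4))
  · intro h0
    rw [Finsupp.notMem_support_iff.1 h0, Finsupp.sum]
    apply Finset.sum_eq_zero
    intro a₂ _
    rw [zero_mul, ite_self]

lemma monoLemma {K : Type} [Field K] (M : AddSubmonoid V2)
    (hpos : ∀ a : V2, a ∈ M → 0 ≤ a 1 ∧ (a 1 = 0 → a = 0))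
    {e1 e2 : V2} (h1 : e1 ∈ M) (h2 : e2 ∈ M) (h11 : e1 1 = 1) (h21 : e2 1 = 1)
    (hne : e1 ≠ e2)
    (w : AddMonoidAlgebra K ↥M) (hw : ∀ b : ↥M, w.coeff b ≠ 0 → 1 ≤ (b : V2) 1)
    (s t : AddMonoidAlgebra K ↥M)
    (hs : s * w = AddMonoidAlgebra.single (⟨e1, h1⟩ : ↥M) (1 : K))
    (ht : t * w = AddMonoidAlgebra.single (⟨e2, h2⟩ : ↥M) (1 : K)) : False := by
  classical
  have k1 := mul_coeff_key M hpos w hw s ⟨e1, h1⟩ h11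
  rw [hs, AddMonoidAlgebra.coeff_single, Finsupp.single_apply, if_pos rfl] at k1
  have k2 := mul_coeff_key M hpos w hw t ⟨e2, h2⟩ h21
  rw [ht, AddMonoidAlgebra.coeff_single, Finsupp.single_apply, if_pos rfl] at k2
  have k3 := mul_coeff_key M hpos w hw s ⟨e2, h2⟩ h21
  rw [hs, AddMonoidAlgebra.coeff_single, Finsupp.single_apply,
    if_neg (fun hc => hne (congrArg Subtype.val hc))] at k3
  have hs0 : s.coeff 0 ≠ 0 := by
    intro h
    rw [h, zero_mul] at k1
    exact one_ne_zero k1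
  have hwx : w.coeff ⟨e2, h2⟩ ≠ 0 := by
    intro h
    rw [h, mul_zero] at k2
    exact one_ne_zero k2
  exact (mul_ne_zero hs0 hwx) k3.symm

lemma coeff_zero (K : Type) [Field K] (z : ToricFaceRing K Phi) :
    (phi1 K z).coeff 0 = (phi2 K z).coeff 0 := by
  have hz : z ∈ Submodule.span K (Set.range (xpow K Phi)) := by
    rw [span_xpow]
    trivial
  induction hz using Submodule.span_induction with
  | mem x hx =>
    obtain ⟨a, rfl⟩ := hx
    rw [phiM_xpow, phiM_xpow]
    by_cases h0 : a = 0
    · subst h0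
      rw [xp_mem K M1 (zero_mem M1), xp_mem K M2 (zero_mem M2)]
      simp [AddMonoidAlgebra.coeff_single, Finsupp.single_apply]
    · have hL : (xp K M1 a).coeff 0 = 0 := by
        by_cases h1 : a ∈ M1
        · rw [xp_mem K M1 h1, AddMonoidAlgebra.coeff_single, Finsupp.single_apply,
            if_neg (fun hc => h0 (congrArg Subtype.val hc))]
        · rw [xp_not_mem K M1 h1, AddMonoidAlgebra.coeff_zero, Finsupp.zero_apply]
      have hR : (xp K M2 a).coeff 0 = 0 := by
        by_cases h2 : a ∈ M2
        · rw [xp_mem K M2 h2, AddMonoidAlgebra.coeff_single, Finsupp.single_apply,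
            if_neg (fun hc => h0 (congrArg Subtype.val hc))]
        · rw [xp_not_mem K M2 h2, AddMonoidAlgebra.coeff_zero, Finsupp.zero_apply]
      rw [hL, hR]
  | zero => simp
  | add x y _ _ hx hy => rw [map_add, map_add, AddMonoidAlgebra.coeff_add, AddMonoidAlgebra.coeff_add, Finsupp.add_apply, Finsupp.add_apply, hx, hy]
  | smul c x _ hx => rw [map_smul, map_smul, AddMonoidAlgebra.coeff_smul_apply, AddMonoidAlgebra.coeff_smul_apply, hx]

end S15
/-! ## Part 12: no short clean filtration of a minimal prime, and non-cleanness -/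

namespace S15

lemma no_small_chain (K : Type) [Field K] (M : AddSubmonoid V2) (hM : FacetData M)
    (hpos : ∀ a : V2, a ∈ M → 0 ≤ a 1 ∧ (a 1 = 0 → a = 0))
    (q : Ideal (ToricFaceRing K Phi))
    (hnpq : ¬ RingHom.ker (phiM K M hM).toRingHom ≤ q)
    (hq0 : ∀ y ∈ q, ∀ x ∈ RingHom.ker (phiM K M hM).toRingHom, x * y = 0)
    (hinj : ∀ z ∈ q, phiM K M hM z = 0 → z = 0)
    (hzero : ∀ z ∈ q, (phiM K M hM z).coeff 0 = 0)
    {e1 e2 : V2} (he1 : e1 ∈ M) (he2 : e2 ∈ M) (he11 : e1 1 = 1) (he21 : e2 1 = 1)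
    (hne : e1 ≠ e2) (hx1q : xpow K Phi e1 ∈ q) (hx2q : xpow K Phi e2 ∈ q)
    (m : ℕ) (N : Fin (m + 1) → Submodule (ToricFaceRing K Phi) (ToricFaceRing K Phi))
    (P' : Fin m → Ideal (ToricFaceRing K Phi))
    (hN0 : N 0 = ⊥) (hNlast : N (Fin.last m) = q)
    (hchain : ∀ i : Fin m, N i.castSucc ≤ N i.succ)
    (hiso : ∀ i : Fin m,
      Nonempty ((↥(N i.succ) ⧸ Submodule.comap (N i.succ).subtype (N i.castSucc))
        ≃ₗ[ToricFaceRing K Phi] (ToricFaceRing K Phi ⧸ P' i)))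
    (hP' : ∀ i, P' i = RingHom.ker (phiM K M hM).toRingHom ∨ P' i = q) : False := by
  set p := RingHom.ker (phiM K M hM).toRingHom with hpdef
  have hφ1 : phiM K M hM (xpow K Phi e1) = AddMonoidAlgebra.single (⟨e1, he1⟩ : ↥M) (1 : K) := by
    rw [phiM_xpow, xp_mem K M he1]
  have hφ2 : phiM K M hM (xpow K Phi e2) = AddMonoidAlgebra.single (⟨e2, he2⟩ : ↥M) (1 : K) := by
    rw [phiM_xpow, xp_mem K M he2]
  have hx1ne : xpow K Phi e1 ≠ 0 := by
    intro h
    rw [h, map_zero] at hφ1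
    exact one_ne_zero (AddMonoidAlgebra.single_eq_zero.1 hφ1.symm)
  have hmono : Monotone N := Fin.monotone_iff_le_succ.2 hchain
  rcases m with _ | m'
  · -- length 0 : q = ⊥
    have hqbot : q = ⊥ := by rw [← hNlast, ← hN0]; rfl
    rw [hqbot, Submodule.mem_bot] at hx1q
    exact hx1ne hx1q
  · -- at least one step
    -- step 0
    obtain ⟨u, huN1, hann, hgen⟩ := lemA (hiso 0).some
    have hsucc0 : (0 : Fin (m' + 1)).succ = (⟨1, by omega⟩ : Fin (m' + 2)) := rfl
    have hcast0 : (0 : Fin (m' + 1)).castSucc = (0 : Fin (m' + 2)) := by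
      simp [Fin.castSucc_zero]
    rw [hcast0, hN0] at hann hgen
    have huq : u ∈ q := by
      rw [← hNlast]
      exact hmono (by
        rw [Fin.le_def]
        simp [Fin.last]) huN1
    have hP0 : P' 0 = p := by
      rcases hP' 0 with h | h
      · exact h
      · exfalso
        apply hnpq
        intro x hx
        rw [← h]
        exact (hann x).1 (by rw [hq0 u huq x hx]; exact Submodule.zero_mem ⊥)
    have hu0 : u ≠ 0 := by
      intro h
      have h1p : (1 : ToricFaceRing K Phi) ∈ P' 0 :=
        (hann 1).1 (by rw [h, mul_zero]; exact Submodule.zero_mem ⊥)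
      rw [hP0, hpdef, RingHom.mem_ker, map_one] at h1p
      exact one_ne_zero h1p
    rcases m' with _ | m''
    · -- exactly one step : q = R·u, ann u = p
      have hq1 : N (0 : Fin 1).succ = q := by
        rw [← hNlast]
        rfl
      rw [hq1] at hgen
      rw [hP0] at hann
      obtain ⟨r1, hr1⟩ := hgen _ hx1q
      rw [Submodule.mem_bot, sub_eq_zero] at hr1
      obtain ⟨r2, hr2⟩ := hgen _ hx2q
      rw [Submodule.mem_bot, sub_eq_zero] at hr2
      set w := phiM K M hM u with hwdef
      have hwsup : ∀ b : ↥M, w.coeff b ≠ 0 → 1 ≤ (b : V2) 1 := by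
        intro b hb
        have hb1 : 0 ≤ (b : V2) 1 := (hpos _ b.2).1
        rcases eq_or_lt_of_le hb1 with h | h
        · exfalso
          have hb0 : b = 0 := Subtype.ext ((hpos _ b.2).2 h.symm)
          rw [hb0] at hb
          exact hb (hzero u huq)
        · omega
      apply monoLemma M hpos he1 he2 he11 he21 hne w hwsup
        (phiM K M hM r1) (phiM K M hM r2)
      · rw [← map_mul, ← hr1, hφ1]
      · rw [← map_mul, ← hr2, hφ2]
    · -- at least two steps
      obtain ⟨u1, hu1N2, hann1, _⟩ := lemA (hiso ⟨1, by omega⟩).some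
      have hcs : (⟨1, by omega⟩ : Fin (m'' + 2)).castSucc = (0 : Fin (m'' + 2)).succ := rfl
      rw [hcs] at hann1
      have hP1 : P' ⟨1, by omega⟩ = p := by
        rcases hP' ⟨1, by omega⟩ with h | h
        · exact h
        · exfalso
          apply hnpq
          intro x hx
          rw [← h]
          have hu1q : u1 ∈ q := by
            rw [← hNlast]
            refine hmono ?_ hu1N2
            rw [Fin.le_def]
            simp only [Fin.succ_mk, Fin.last]
            omega
          refine (hann1 x).1 ?_
          rw [hq0 u1 hu1q x hx]
          exact Submodule.zero_mem _
      have huP : u ∈ P' ⟨1, by omega⟩ := by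
        refine (hann1 u).1 ?_
        rw [mul_comm]
        exact Submodule.smul_mem _ u1 huN1
      rw [hP1, hpdef, RingHom.mem_ker] at huP
      exact hu0 (hinj u huq huP)

theorem not_clean (K : Type) [Field K] : ¬ IsCleanRing (ToricFaceRing K Phi) := by
  rintro ⟨n, Mf, P, hM0, hMlast, hchain, hiso, hPset⟩
  have hPmem : ∀ i, P i = P1 K ∨ P i = P2 K := by
    intro i
    have hmem : P i ∈ minimalPrimes (ToricFaceRing K Phi) := by
      rw [← hPset]
      exact ⟨i, rfl⟩
    rw [minPrimes] at hmem
    exact hmem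
  rcases n with _ | m
  · have h1 : (1 : ToricFaceRing K Phi) ∈ Mf 0 := by
      rw [show (0 : Fin 1) = Fin.last 0 from rfl, hMlast]
      trivial
    rw [hM0] at h1
    exact one_ne_zero ((Submodule.mem_bot _).1 h1)
  · set i1 : Fin (m + 1) := Fin.last m with hi1
    have htop : Mf i1.succ = ⊤ := by
      rw [hi1, Fin.succ_last]
      exact hMlast
    have hprime : (P i1).IsPrime := by
      rcases hPmem i1 with h | h <;> rw [h]
      · exact P1_prime K
      · exact P2_prime K
    have hq : Mf i1.castSucc = P i1 :=
      lemTop hprime (by rw [htop]; trivial) (hchain i1) (hiso i1).some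
    set N : Fin (m + 1) → Submodule (ToricFaceRing K Phi) (ToricFaceRing K Phi) :=
      fun j => Mf j.castSucc with hN
    set P' : Fin m → Ideal (ToricFaceRing K Phi) := fun i => P i.castSucc with hP'def
    have hN0 : N 0 = ⊥ := by
      show Mf (Fin.castSucc 0) = ⊥
      rw [Fin.castSucc_zero]
      exact hM0
    have hNlast : N (Fin.last m) = P i1 := hq
    have hchain' : ∀ i : Fin m, N i.castSucc ≤ N i.succ := by
      intro i
      show Mf i.castSucc.castSucc ≤ Mf i.succ.castSucc
      rw [← Fin.succ_castSucc]
      exact hchain i.castSucc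
    have hiso' : ∀ i : Fin m,
        Nonempty ((↥(N i.succ) ⧸ Submodule.comap (N i.succ).subtype (N i.castSucc))
          ≃ₗ[ToricFaceRing K Phi] (ToricFaceRing K Phi ⧸ P' i)) := by
      intro i
      have hidx : i.castSucc.succ = i.succ.castSucc := Fin.succ_castSucc i
      have h := hiso i.castSucc
      show Nonempty ((↥(Mf i.succ.castSucc) ⧸
        Submodule.comap (Mf i.succ.castSucc).subtype (Mf i.castSucc.castSucc))
          ≃ₗ[ToricFaceRing K Phi] (ToricFaceRing K Phi ⧸ P i.castSucc))
      rw [← hidx]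
      exact h
    have hPm : ∀ i : Fin m, P' i = P1 K ∨ P' i = P2 K := fun i => hPmem i.castSucc
    have hposM1 : ∀ a : V2, a ∈ M1 → 0 ≤ a 1 ∧ (a 1 = 0 → a = 0) := by
      intro a ha
      rw [mem_M1] at ha
      constructor
      · omega
      · intro h
        rw [int_eq_zero_iff]
        omega
    have hposM2 : ∀ a : V2, a ∈ M2 → 0 ≤ a 1 ∧ (a 1 = 0 → a = 0) := by
      intro a ha
      rw [mem_M2] at ha
      constructor
      · omega
      · intro h
        rw [int_eq_zero_iff]
        omega
    rcases hPmem i1 with hcase | hcase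
    · -- q = P1 : filter through phi2
      refine no_small_chain K M2 facetData_M2 hposM2 (P1 K) ?_ ?_ ?_ ?_
        am11_M2 am21_M2 ?_ ?_ ?_ (xpow_am11_P1 K) (xpow_am21_P1 K) m N P' hN0
        (by rw [hNlast, hcase]) hchain' hiso' ?_
      · exact not_le_P2_P1 K
      · intro y hy x hx
        rw [mul_comm]
        exact P_mul_zero K y hy x hx
      · intro z hz h2
        exact psi_inj K z ((mem_P1_iff K z).1 hz) h2
      · intro z hz
        rw [← coeff_zero K z]
        rw [(mem_P1_iff K z).1 hz, AddMonoidAlgebra.coeff_zero, Finsupp.zero_apply]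
      · norm_num [am11]
      · norm_num [am21]
      · intro h
        have := congrFun h 0
        norm_num [am11, am21] at this
      · intro i
        rcases hPm i with h | h
        · right
          rw [h]
        · left
          rw [h]
          rfl
    · -- q = P2 : filter through phi1
      refine no_small_chain K M1 facetData_M1 hposM1 (P2 K) ?_ ?_ ?_ ?_
        a11_M1 a21_M1 ?_ ?_ ?_ (xpow_a11_P2 K) (xpow_a21_P2 K) m N P' hN0
        (by rw [hNlast, hcase]) hchain' hiso' ?_
      · exact not_le_P1_P2 K
      · intro y hy x hx
        exact P_mul_zero K x hx y hy
      · intro z hz h1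
        exact psi_inj K z h1 ((mem_P2_iff K z).1 hz)
      · intro z hz
        rw [coeff_zero K z]
        rw [(mem_P2_iff K z).1 hz, AddMonoidAlgebra.coeff_zero, Finsupp.zero_apply]
      · norm_num [a11]
      · norm_num [a21]
      · intro h
        have := congrFun h 0
        norm_num [a11, a21] at this
      · intro i
        rcases hPm i with h | h
        · left
          rw [h]
          rfl
        · right
          rw [h]

end S15

/-- There is a shellable rational pointed fan in `ℝ²` — the fan with
facets `C₁ = cone((0,1),(2,1))` and `C₂ = cone((0,1),(−2,1))` — whose toric face ring is
not clean (over any field), because no lattice point `γ` as in the cleanness criterion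
exists for either ordering of the two facets. -/
theorem exists_shellable_not_clean :
    ∃ Φ : Fan 2,
      Φ.cones = {conicalHull {![(0:ℝ),1], ![2,1]}, conicalHull {![(0:ℝ),1], ![-2,1]},
        conicalHull {![(0:ℝ),1]}, conicalHull {![(2:ℝ),1]}, conicalHull {![(-2:ℝ),1]},
        conicalHull (∅ : Finset (Fin 2 → ℝ))} ∧
      IsShellable Φ ∧
      (∀ (K : Type) [Field K], ¬ IsCleanRing (ToricFaceRing K Φ)) ∧
      (∀ Cj Cj' : Set (Fin 2 → ℝ),
        ((Cj = conicalHull {![(0:ℝ),1], ![2,1]} ∧ Cj' = conicalHull {![(0:ℝ),1], ![-2,1]}) ∨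
         (Cj = conicalHull {![(0:ℝ),1], ![-2,1]} ∧ Cj' = conicalHull {![(0:ℝ),1], ![2,1]})) →
        ¬ ∃ γ : Fin 2 → ℤ, Z2R γ ∈ Cj ∧
            {D ∈ faceSet Φ Cj | Z2R γ ∈ D} = faceSet Φ Cj \ faceSet Φ Cj' ∧
            {a : Fin 2 → ℤ | ∃ D ∈ faceSet Φ Cj, Z2R γ ∈ D ∧ Z2R a ∈ relint D} =
              {a : Fin 2 → ℤ | ∃ b : Fin 2 → ℤ, Z2R b ∈ Cj ∧ a = γ + b}) := by
  refine ⟨S15.Phi, rfl, S15.shellable_Phi, fun K _ => S15.not_clean K, ?_⟩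
  rintro Cj Cj' (⟨rfl, rfl⟩ | ⟨rfl, rfl⟩)
  · exact S15.no_gamma_C1
  · exact S15.no_gamma_C2
end
end

section
/- Let Σ be a rational pointed fan in ℝ^d, Σ' a subfan of Σ, and w a rational point in ℝ^{d+1} ∖ ℝ^d (e.g. w = e_{d+1}), where ℝ^d is embedded in ℝ^{d+1} on the first d coordinates. Let w∗Σ' be the fan in ℝ^{d+1} whose cones are the cones w∗D = cone(w ∪ D) for D ∈ Σ' together with the cones of Σ'. Then Π = (w∗Σ') ∪ Σ is a rational pointed fan in ℝ^{d+1}, and dim(w∗Σ') = dim Σ' + 1. -/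
open scoped BigOperators Classical

noncomputable section

/-- Embedding of `ℝ^d` into `ℝ^{d+1}` on the first `d` coordinates, applied to a cone. -/
def embCone {d : ℕ} (C : Set (Fin d → ℝ)) : Set (Fin (d + 1) → ℝ) :=
  (fun y => Fin.snoc y (0 : ℝ)) '' C

/-- The join `w ∗ D ⊆ ℝ^{d+1}` of a point `w` with a cone `D ⊆ ℝ^d`: the smallest cone
containing `w` and `D`. -/
def joinCone {d : ℕ} (w : Fin (d + 1) → ℝ) (D : Set (Fin d → ℝ)) :
    Set (Fin (d + 1) → ℝ) :=
  {x | ∃ s : ℝ, 0 ≤ s ∧ ∃ y ∈ D, x = s • w + Fin.snoc y (0 : ℝ)}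
section JoinAux

variable {d : ℕ}

/-- The linear embedding of `ℝ^d` into `ℝ^{d+1}`. -/
def embL (d : ℕ) : (Fin d → ℝ) →ₗ[ℝ] (Fin (d + 1) → ℝ) where
  toFun y := Fin.snoc y 0
  map_add' x y := by
    funext i
    refine Fin.lastCases ?_ (fun j => ?_) i <;> simp
  map_smul' c x := by
    funext i
    refine Fin.lastCases ?_ (fun j => ?_) i <;> simp

lemma embL_apply (y : Fin d → ℝ) : embL d y = Fin.snoc y 0 := rfl

lemma embL_last (y : Fin d → ℝ) : embL d y (Fin.last d) = 0 := by
  simp [embL_apply]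

lemma embL_castSucc (y : Fin d → ℝ) (i : Fin d) :
    embL d y (Fin.castSucc i) = y i := by simp [embL_apply]

lemma embL_injective : Function.Injective (embL d) := by
  intro x y h
  funext i
  have := congrFun h (Fin.castSucc i)
  simpa [embL_castSucc] using this

@[simp] lemma snoc_zero_eq (y : Fin d → ℝ) : (Fin.snoc y (0:ℝ) : Fin (d+1) → ℝ) = embL d y := rfl

lemma embCone_eq (C : Set (Fin d → ℝ)) : embCone C = (embL d) '' C := rfl

lemma mem_joinCone {w : Fin (d + 1) → ℝ} {D : Set (Fin d → ℝ)} {x : Fin (d + 1) → ℝ} :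
    x ∈ joinCone w D ↔ ∃ s : ℝ, 0 ≤ s ∧ ∃ y ∈ D, x = s • w + embL d y := Iff.rfl

lemma join_rep_unique {w : Fin (d + 1) → ℝ} (hw : w (Fin.last d) ≠ 0)
    {s t : ℝ} {y z : Fin d → ℝ} (h : s • w + embL d y = t • w + embL d z) :
    s = t ∧ y = z := by
  have hl := congrFun h (Fin.last d)
  simp only [Pi.add_apply, Pi.smul_apply, embL_last, smul_eq_mul, add_zero] at hl
  have hst : s = t := mul_right_cancel₀ hw hl
  subst hst
  refine ⟨rfl, embL_injective (add_left_cancel h)⟩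

end JoinAux
section JoinAux2

variable {d : ℕ}

lemma conicalHull_isConvexCone (S : Finset (Fin d → ℝ)) :
    IsConvexCone (conicalHull S) := by
  refine ⟨⟨0, fun v => le_refl 0, by simp⟩, ?_, ?_⟩
  · rintro x ⟨c, hc, rfl⟩ y ⟨c', hc', rfl⟩
    exact ⟨fun v => c v + c' v, fun v => add_nonneg (hc v) (hc' v), by
      simp [add_smul, Finset.sum_add_distrib]⟩
  · rintro x ⟨c, hc, rfl⟩ t ht
    exact ⟨fun v => t * c v, fun v => mul_nonneg ht (hc v), by
      simp [Finset.smul_sum, mul_smul]⟩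

lemma IsRatCone.isConvexCone {C : Set (Fin d → ℝ)} (h : IsRatCone C) :
    IsConvexCone C := by
  obtain ⟨S, -, rfl⟩ := h
  exact conicalHull_isConvexCone S

lemma embCone_isConvexCone {C : Set (Fin d → ℝ)} (h : IsConvexCone C) :
    IsConvexCone (embCone C) := by
  rw [embCone_eq]
  refine ⟨⟨0, h.1, by simp⟩, ?_, ?_⟩
  · rintro x ⟨a, ha, rfl⟩ y ⟨b, hb, rfl⟩
    exact ⟨a + b, h.2.1 a ha b hb, by simp⟩
  · rintro x ⟨a, ha, rfl⟩ t ht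
    exact ⟨t • a, h.2.2 a ha t ht, by simp⟩

lemma emb_mem_joinCone {w : Fin (d + 1) → ℝ} {D : Set (Fin d → ℝ)} {y : Fin d → ℝ}
    (hy : y ∈ D) : embL d y ∈ joinCone w D :=
  ⟨0, le_refl 0, y, hy, by simp⟩

lemma smul_w_mem_joinCone {w : Fin (d + 1) → ℝ} {D : Set (Fin d → ℝ)}
    (hD : (0 : Fin d → ℝ) ∈ D) {s : ℝ} (hs : 0 ≤ s) : s • w ∈ joinCone w D :=
  ⟨s, hs, 0, hD, by simp⟩

lemma joinCone_isConvexCone {w : Fin (d + 1) → ℝ} {D : Set (Fin d → ℝ)}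
    (h : IsConvexCone D) : IsConvexCone (joinCone w D) := by
  refine ⟨⟨0, le_refl 0, 0, h.1, by simp⟩, ?_, ?_⟩
  · rintro x ⟨s, hs, y, hy, rfl⟩ x' ⟨s', hs', y', hy', rfl⟩
    refine ⟨s + s', add_nonneg hs hs', y + y', h.2.1 y hy y' hy', ?_⟩
    simp only [snoc_zero_eq, map_add, add_smul]
    abel
  · rintro x ⟨s, hs, y, hy, rfl⟩ t ht
    refine ⟨t * s, mul_nonneg ht hs, t • y, h.2.2 y hy t ht, ?_⟩
    simp only [snoc_zero_eq, map_smul, smul_add, mul_smul]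

lemma embCone_pointed {C : Set (Fin d → ℝ)} (h : IsPointedSet C) :
    IsPointedSet (embCone C) := by
  rintro x ⟨a, ha, rfl⟩ hneg
  rw [embCone_eq] at hneg
  obtain ⟨b, hb, hba⟩ := hneg
  have hab : b = -a := embL_injective (by rw [hba]; simp [snoc_zero_eq, map_neg])
  subst hab
  have : a = 0 := h a ha hb
  simp [snoc_zero_eq, this]

lemma joinCone_pointed {w : Fin (d + 1) → ℝ} (hw : w (Fin.last d) ≠ 0)
    {D : Set (Fin d → ℝ)} (h : IsPointedSet D) : IsPointedSet (joinCone w D) := by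
  rintro x ⟨s, hs, y, hy, rfl⟩ ⟨s', hs', y', hy', hneg⟩
  simp only [snoc_zero_eq] at *
  have hsum : (s + s') • w + embL d (y + y') = (0:ℝ) • w + embL d 0 := by
    have h0 : (s • w + embL d y) + (s' • w + embL d y') = 0 := by
      rw [← hneg]; abel
    rw [add_smul, map_add, zero_smul, map_zero, add_zero, ← h0]
    abel
  obtain ⟨hss, hyy⟩ := join_rep_unique (s := s + s') (t := 0) (y := y + y') (z := 0) hw hsum
  have hs0 : s = 0 := le_antisymm (by linarith) hs
  have hy'm : y' = -y := eq_neg_of_add_eq_zero_right hyy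
  have hy0 : y = 0 := h y hy (hy'm ▸ hy')
  rw [hs0, hy0, zero_smul, map_zero, add_zero]

end JoinAux2
section JoinAux3

variable {d : ℕ} {w : Fin (d + 1) → ℝ}

lemma embCone_face {C' C : Set (Fin d → ℝ)} (h : IsFaceOf C' C) :
    IsFaceOf (embCone C') (embCone C) := by
  refine ⟨embCone_isConvexCone h.1, Set.image_mono h.2.1, ?_⟩
  rintro x ⟨a, ha, rfl⟩ y ⟨b, hb, rfl⟩ hxy
  rw [embCone_eq] at hxy
  obtain ⟨c, hc, hcab⟩ := hxy
  have : c = a + b := embL_injective (by rw [hcab]; simp)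
  subst this
  obtain ⟨h1, h2⟩ := h.2.2 a ha b hb hc
  exact ⟨⟨a, h1, rfl⟩, ⟨b, h2, rfl⟩⟩

lemma joinCone_face (hw : w (Fin.last d) ≠ 0) {D'' D : Set (Fin d → ℝ)}
    (hD : IsConvexCone D) (h : IsFaceOf D'' D) :
    IsFaceOf (joinCone w D'') (joinCone w D) := by
  refine ⟨joinCone_isConvexCone h.1, ?_, ?_⟩
  · rintro x ⟨s, hs, y, hy, rfl⟩
    exact ⟨s, hs, y, h.2.1 hy, rfl⟩
  · rintro x ⟨s, hs, y, hy, rfl⟩ x' ⟨s', hs', y', hy', rfl⟩ ⟨t, ht, z, hz, hsum⟩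
    simp only [snoc_zero_eq] at hsum
    have hrep : (s + s') • w + embL d (y + y') = t • w + embL d z := by
      rw [← hsum, add_smul, map_add]; abel
    obtain ⟨hst, hyz⟩ := join_rep_unique hw hrep
    have := h.2.2 y hy y' hy' (hyz ▸ hz)
    exact ⟨⟨s, hs, y, this.1, rfl⟩, ⟨s', hs', y', this.2, rfl⟩⟩

lemma embCone_face_joinCone (hw : w (Fin.last d) ≠ 0) {D'' D : Set (Fin d → ℝ)}
    (hD : IsConvexCone D) (h : IsFaceOf D'' D) :
    IsFaceOf (embCone D'') (joinCone w D) := by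
  refine ⟨embCone_isConvexCone h.1, ?_, ?_⟩
  · rintro x ⟨y, hy, rfl⟩
    exact emb_mem_joinCone (h.2.1 hy)
  · rintro x ⟨s, hs, y, hy, rfl⟩ x' ⟨s', hs', y', hy', rfl⟩ hsum
    rw [embCone_eq] at hsum
    obtain ⟨z, hz, hzeq⟩ := hsum
    simp only [snoc_zero_eq] at hzeq
    have hrep : embL d z = (s + s') • w + embL d (y + y') := by
      rw [hzeq, add_smul, map_add]; abel
    have hrep' : (s + s') • w + embL d (y + y') = (0:ℝ) • w + embL d z := by
      rw [← hrep, zero_smul, zero_add]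
    obtain ⟨hst, hyz⟩ := join_rep_unique (s := s + s') (t := 0) (y := y + y') (z := z)
      hw hrep'
    have hs0 : s = 0 := le_antisymm (by linarith) hs
    have hs'0 : s' = 0 := le_antisymm (by linarith) hs'
    have := h.2.2 y hy y' hy' (hyz ▸ hz)
    subst hs0; subst hs'0
    simp only [zero_smul, zero_add]
    exact ⟨⟨y, this.1, rfl⟩, ⟨y', this.2, rfl⟩⟩

/-- Every face of an embedded cone is an embedded face. -/
lemma face_of_embCone {C : Set (Fin d → ℝ)} (hC : IsConvexCone C)
    {F : Set (Fin (d + 1) → ℝ)} (hF : IsFaceOf F (embCone C)) :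
    ∃ C₀, IsFaceOf C₀ C ∧ F = embCone C₀ := by
  refine ⟨{y | y ∈ C ∧ embL d y ∈ F}, ⟨⟨?_, ?_, ?_⟩, fun y hy => hy.1, ?_⟩, ?_⟩
  · exact ⟨hC.1, by rw [map_zero]; exact hF.1.1⟩
  · rintro y ⟨hy, hyF⟩ y' ⟨hy', hy'F⟩
    exact ⟨hC.2.1 y hy y' hy', by rw [map_add]; exact hF.1.2.1 _ hyF _ hy'F⟩
  · rintro y ⟨hy, hyF⟩ t ht
    exact ⟨hC.2.2 y hy t ht, by rw [map_smul]; exact hF.1.2.2 _ hyF t ht⟩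
  · rintro a ha b hb ⟨hab, habF⟩
    have h1 : embL d a ∈ embCone C := ⟨a, ha, rfl⟩
    have h2 : embL d b ∈ embCone C := ⟨b, hb, rfl⟩
    have h3 : embL d a + embL d b ∈ F := by rw [← map_add]; exact habF
    obtain ⟨k1, k2⟩ := hF.2.2 _ h1 _ h2 h3
    exact ⟨⟨ha, k1⟩, ⟨hb, k2⟩⟩
  · ext x
    constructor
    · intro hxF
      obtain ⟨y, hy, rfl⟩ := hF.2.1 hxF
      exact ⟨y, ⟨hy, hxF⟩, rfl⟩
    · rintro ⟨y, ⟨hy, hyF⟩, rfl⟩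
      exact hyF

/-- Every face of a join cone is a join of a face or an embedded face. -/
lemma face_of_joinCone (hw : w (Fin.last d) ≠ 0) {D : Set (Fin d → ℝ)}
    (hD : IsConvexCone D) {F : Set (Fin (d + 1) → ℝ)} (hF : IsFaceOf F (joinCone w D)) :
    ∃ D₀, IsFaceOf D₀ D ∧ (F = joinCone w D₀ ∨ F = embCone D₀) := by
  set D₀ : Set (Fin d → ℝ) := {y | y ∈ D ∧ embL d y ∈ F} with hD₀
  have hface : IsFaceOf D₀ D := by
    refine ⟨⟨⟨hD.1, by rw [map_zero]; exact hF.1.1⟩, ?_, ?_⟩, fun y hy => hy.1, ?_⟩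
    · rintro y ⟨hy, hyF⟩ y' ⟨hy', hy'F⟩
      exact ⟨hD.2.1 y hy y' hy', by rw [map_add]; exact hF.1.2.1 _ hyF _ hy'F⟩
    · rintro y ⟨hy, hyF⟩ t ht
      exact ⟨hD.2.2 y hy t ht, by rw [map_smul]; exact hF.1.2.2 _ hyF t ht⟩
    · rintro a ha b hb ⟨hab, habF⟩
      have h3 : embL d a + embL d b ∈ F := by rw [← map_add]; exact habF
      obtain ⟨k1, k2⟩ := hF.2.2 _ (emb_mem_joinCone ha) _ (emb_mem_joinCone hb) h3
      exact ⟨⟨ha, k1⟩, ⟨hb, k2⟩⟩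
  -- a membership splitting fact
  have hsplit : ∀ x ∈ F, ∃ s : ℝ, 0 ≤ s ∧ ∃ y ∈ D₀, s • w ∈ F ∧ x = s • w + embL d y := by
    intro x hxF
    obtain ⟨s, hs, y, hy, rfl⟩ := hF.2.1 hxF
    simp only [snoc_zero_eq] at hxF ⊢
    have h1 : s • w ∈ joinCone w D := smul_w_mem_joinCone hD.1 hs
    have h2 : embL d y ∈ joinCone w D := emb_mem_joinCone hy
    obtain ⟨k1, k2⟩ := hF.2.2 _ h1 _ h2 hxF
    exact ⟨s, hs, y, ⟨hy, k2⟩, k1, rfl⟩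
  refine ⟨D₀, hface, ?_⟩
  by_cases hwF : w ∈ F
  · left
    ext x
    constructor
    · intro hxF
      obtain ⟨s, hs, y, hy, -, rfl⟩ := hsplit x hxF
      exact ⟨s, hs, y, hy, by simp⟩
    · rintro ⟨s, hs, y, ⟨hy, hyF⟩, rfl⟩
      have hsw : s • w ∈ F := hF.1.2.2 w hwF s hs
      simpa using hF.1.2.1 _ hsw _ hyF
  · right
    ext x
    constructor
    · intro hxF
      obtain ⟨s, hs, y, hy, hswF, rfl⟩ := hsplit x hxF
      have hs0 : s = 0 := by
        by_contra hs0
        have hspos : 0 < s := lt_of_le_of_ne hs (Ne.symm hs0)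
        have : w ∈ F := by
          have := hF.1.2.2 _ hswF s⁻¹ (le_of_lt (inv_pos.mpr hspos))
          rwa [smul_smul, inv_mul_cancel₀ (ne_of_gt hspos), one_smul] at this
        exact hwF this
      subst hs0
      exact ⟨y, hy, by simp⟩
    · rintro ⟨y, ⟨hy, hyF⟩, rfl⟩
      simpa using hyF

end JoinAux3
section JoinAux4

variable {d : ℕ} {w : Fin (d + 1) → ℝ}

lemma embCone_inter (C C' : Set (Fin d → ℝ)) :
    embCone C ∩ embCone C' = embCone (C ∩ C') := by
  rw [embCone_eq, embCone_eq, embCone_eq]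
  exact (Set.image_inter embL_injective).symm

lemma joinCone_inter (hw : w (Fin.last d) ≠ 0) (D D' : Set (Fin d → ℝ)) :
    joinCone w D ∩ joinCone w D' = joinCone w (D ∩ D') := by
  ext x
  constructor
  · rintro ⟨⟨s, hs, y, hy, rfl⟩, ⟨s', hs', y', hy', heq⟩⟩
    simp only [snoc_zero_eq] at heq
    obtain ⟨rfl, rfl⟩ := join_rep_unique hw heq
    exact ⟨s, hs, y, ⟨hy, hy'⟩, rfl⟩
  · rintro ⟨s, hs, y, ⟨hy, hy'⟩, rfl⟩
    exact ⟨⟨s, hs, y, hy, rfl⟩, ⟨s, hs, y, hy', rfl⟩⟩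

lemma embCone_inter_joinCone (hw : w (Fin.last d) ≠ 0) (C D : Set (Fin d → ℝ)) :
    embCone C ∩ joinCone w D = embCone (C ∩ D) := by
  ext x
  constructor
  · rintro ⟨⟨a, ha, rfl⟩, ⟨s, hs, y, hy, heq⟩⟩
    simp only [snoc_zero_eq] at heq
    have heq' : s • w + embL d y = (0:ℝ) • w + embL d a := by
      rw [zero_smul, zero_add, heq]
    obtain ⟨rfl, rfl⟩ := join_rep_unique (t := 0) hw heq'
    exact ⟨y, ⟨ha, hy⟩, rfl⟩
  · rintro ⟨y, ⟨hyC, hyD⟩, rfl⟩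
    exact ⟨⟨y, hyC, rfl⟩, emb_mem_joinCone hyD⟩

/-- The image of a conical hull under the embedding. -/
lemma embCone_conicalHull (S : Finset (Fin d → ℝ)) :
    embCone (conicalHull S) = conicalHull (S.image (embL d)) := by
  ext x
  constructor
  · rintro ⟨y, ⟨c, hc, rfl⟩, rfl⟩
    refine ⟨fun u => c (fun i => u (Fin.castSucc i)), fun u => hc _, ?_⟩
    rw [Finset.sum_image (fun a _ b _ h => embL_injective h)]
    simp only [snoc_zero_eq, map_sum, map_smul]
    refine Finset.sum_congr rfl fun v hv => ?_
    congr 1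
    congr 1
    funext i
    rw [embL_castSucc]
  · rintro ⟨c, hc, rfl⟩
    refine ⟨∑ v ∈ S, c (embL d v) • v, ⟨fun v => c (embL d v), fun v => hc _, rfl⟩, ?_⟩
    rw [Finset.sum_image (fun a _ b _ h => embL_injective h)]
    simp only [snoc_zero_eq, map_sum, map_smul]

lemma w_not_mem_image (hw : w (Fin.last d) ≠ 0) (S : Finset (Fin d → ℝ)) :
    w ∉ S.image (embL d) := by
  intro h
  obtain ⟨v, -, hv⟩ := Finset.mem_image.mp h
  apply hw
  rw [← hv, embL_last]

/-- The join cone over a conical hull is a conical hull. -/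
lemma joinCone_conicalHull (hw : w (Fin.last d) ≠ 0) (S : Finset (Fin d → ℝ)) :
    joinCone w (conicalHull S) = conicalHull (insert w (S.image (embL d))) := by
  have hwS := w_not_mem_image hw S
  ext x
  constructor
  · rintro ⟨s, hs, y, ⟨c, hc, rfl⟩, rfl⟩
    refine ⟨fun u => if u = w then s else c (fun i => u (Fin.castSucc i)), ?_, ?_⟩
    · intro u
      beta_reduce
      split
      · exact hs
      · exact hc _
    · beta_reduce
      rw [Finset.sum_insert hwS, if_pos rfl]
      simp only [snoc_zero_eq]
      congr 1
      rw [Finset.sum_image (fun a _ b _ h => embL_injective h)]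
      simp only [map_sum, map_smul]
      refine Finset.sum_congr rfl fun v hv => ?_
      rw [if_neg]
      · congr 2
        funext i
        rw [embL_castSucc]
      · intro h
        exact hw (by rw [← h, embL_last])
  · rintro ⟨c, hc, rfl⟩
    rw [Finset.sum_insert hwS]
    refine ⟨c w, hc w, ∑ v ∈ S, c (embL d v) • v, ⟨fun v => c (embL d v), fun v => hc _, rfl⟩, ?_⟩
    rw [Finset.sum_image (fun a _ b _ h => embL_injective h)]
    simp only [snoc_zero_eq, map_sum, map_smul]

/-- Coordinates of an embedded rational vector are rational. -/
lemma embL_rat {v : Fin d → ℝ} (hv : ∀ i, ∃ q : ℚ, v i = (q : ℝ)) :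
    ∀ i, ∃ q : ℚ, embL d v i = (q : ℝ) := by
  intro i
  refine Fin.lastCases ?_ (fun j => ?_) i
  · exact ⟨0, by rw [embL_last]; simp⟩
  · obtain ⟨q, hq⟩ := hv j
    exact ⟨q, by rw [embL_castSucc, hq]⟩

lemma embCone_ratCone {C : Set (Fin d → ℝ)} (h : IsRatCone C) : IsRatCone (embCone C) := by
  obtain ⟨S, hS, rfl⟩ := h
  refine ⟨S.image (embL d), ?_, embCone_conicalHull S⟩
  intro v hv
  obtain ⟨u, hu, rfl⟩ := Finset.mem_image.mp hv
  exact embL_rat (hS u hu)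

lemma joinCone_ratCone (hw : w (Fin.last d) ≠ 0) (hwr : ∀ i, ∃ q : ℚ, w i = (q : ℝ))
    {D : Set (Fin d → ℝ)} (h : IsRatCone D) : IsRatCone (joinCone w D) := by
  obtain ⟨S, hS, rfl⟩ := h
  refine ⟨insert w (S.image (embL d)), ?_, joinCone_conicalHull hw S⟩
  intro v hv
  rcases Finset.mem_insert.mp hv with rfl | hv
  · exact hwr
  · obtain ⟨u, hu, rfl⟩ := Finset.mem_image.mp hv
    exact embL_rat (hS u hu)

end JoinAux4
section JoinAux5

variable {d : ℕ} {w : Fin (d + 1) → ℝ}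

lemma coneDim_embCone (C : Set (Fin d → ℝ)) : coneDim (embCone C) = coneDim C := by
  unfold coneDim
  rw [embCone_eq, Submodule.span_image]
  exact (LinearEquiv.finrank_eq
    (Submodule.equivMapOfInjective (embL d) embL_injective (Submodule.span ℝ C))).symm

lemma span_joinCone (hw : w (Fin.last d) ≠ 0) {D : Set (Fin d → ℝ)}
    (h0 : (0 : Fin d → ℝ) ∈ D) :
    Submodule.span ℝ (joinCone w D) = (ℝ ∙ w) ⊔ Submodule.span ℝ (embCone D) := by
  apply le_antisymm
  · rw [Submodule.span_le]
    rintro x ⟨s, hs, y, hy, rfl⟩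
    simp only [snoc_zero_eq]
    apply Submodule.add_mem
    · exact Submodule.mem_sup_left (Submodule.smul_mem _ s (Submodule.mem_span_singleton_self w))
    · exact Submodule.mem_sup_right (Submodule.subset_span ⟨y, hy, rfl⟩)
  · apply sup_le
    · rw [Submodule.span_le, Set.singleton_subset_iff]
      apply Submodule.subset_span
      exact ⟨1, zero_le_one, 0, h0, by simp⟩
    · rw [Submodule.span_le]
      rintro x ⟨y, hy, rfl⟩
      exact Submodule.subset_span (emb_mem_joinCone hy)

lemma coneDim_joinCone (hw : w (Fin.last d) ≠ 0) {D : Set (Fin d → ℝ)}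
    (h0 : (0 : Fin d → ℝ) ∈ D) : coneDim (joinCone w D) = coneDim D + 1 := by
  have hw0 : w ≠ 0 := fun h => hw (by rw [h]; rfl)
  have hinf : (ℝ ∙ w) ⊓ Submodule.span ℝ (embCone D) = ⊥ := by
    rw [eq_bot_iff]
    rintro x ⟨hx1, hx2⟩
    obtain ⟨c, rfl⟩ := Submodule.mem_span_singleton.mp hx1
    have hker : Submodule.span ℝ (embCone D) ≤ LinearMap.ker (LinearMap.proj (R := ℝ)
        (φ := fun _ : Fin (d+1) => ℝ) (Fin.last d)) := by
      rw [Submodule.span_le]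
      rintro z ⟨y, hy, rfl⟩
      simp only [SetLike.mem_coe, LinearMap.mem_ker, LinearMap.proj_apply, snoc_zero_eq,
        embL_last]
    have := hker hx2
    simp only [SetLike.mem_coe, LinearMap.mem_ker, LinearMap.proj_apply, Pi.smul_apply,
      smul_eq_mul] at this
    have hc : c = 0 := by
      rcases mul_eq_zero.mp this with h | h
      · exact h
      · exact absurd h hw
    simp [hc]
  have hkey := Submodule.finrank_sup_add_finrank_inf_eq (ℝ ∙ w) (Submodule.span ℝ (embCone D))
  rw [hinf, finrank_bot, add_zero, finrank_span_singleton hw0] at hkey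
  have h2 : coneDim (joinCone w D) = 1 + coneDim (embCone D) := by
    have h3 : coneDim (joinCone w D) =
        Module.finrank ℝ ↥((ℝ ∙ w) ⊔ Submodule.span ℝ (embCone D)) := by
      unfold coneDim
      rw [span_joinCone hw h0]
    rw [h3, hkey]
    rfl
  rw [h2, coneDim_embCone]
  omega

end JoinAux5
/-- For a subfan `Φ'` of `Φ` and a rational point `w ∈ ℝ^{d+1} ∖ ℝ^d`,
the collection `Π = (w ∗ Φ') ∪ Φ` is a rational pointed fan in `ℝ^{d+1}`, and
`dim (w ∗ Φ') = dim Φ' + 1`. -/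
theorem join_fan_exists {d : ℕ} (Φ Φ' : Fan d) (hsub : Φ'.cones ⊆ Φ.cones)
    (hne : Φ'.cones.Nonempty) (w : Fin (d + 1) → ℝ)
    (hrat : ∀ i, ∃ q : ℚ, w i = (q : ℝ)) (hw : w (Fin.last d) ≠ 0) :
    (∃ P : Fan (d + 1),
        P.cones = (embCone '' Φ.cones) ∪ (joinCone w '' Φ'.cones)) ∧
    sSup (coneDim '' ((joinCone w '' Φ'.cones) ∪ (embCone '' Φ'.cones))) =
      Fan.dim Φ' + 1 := by
  have hconv : ∀ C ∈ Φ.cones, IsConvexCone C := fun C hC => (Φ.pointed C hC).1.isConvexCone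
  have hzero : ∀ C ∈ Φ.cones, (0 : Fin d → ℝ) ∈ C := fun C hC => (hconv C hC).1
  constructor
  · refine ⟨⟨(embCone '' Φ.cones) ∪ (joinCone w '' Φ'.cones), ?_, ?_, ?_, ?_⟩, rfl⟩
    · exact (Φ.finite.image _).union (Φ'.finite.image _)
    · rintro C (⟨C₀, hC₀, rfl⟩ | ⟨D, hD, rfl⟩)
      · exact ⟨embCone_ratCone (Φ.pointed C₀ hC₀).1, embCone_pointed (Φ.pointed C₀ hC₀).2⟩
      · exact ⟨joinCone_ratCone hw hrat (Φ.pointed D (hsub hD)).1,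
          joinCone_pointed hw (Φ.pointed D (hsub hD)).2⟩
    · rintro C (⟨C₀, hC₀, rfl⟩ | ⟨D, hD, rfl⟩) F hF
      · obtain ⟨C₁, hface, rfl⟩ := face_of_embCone (hconv C₀ hC₀) hF
        exact Or.inl ⟨C₁, Φ.faces_mem C₀ hC₀ C₁ hface, rfl⟩
      · obtain ⟨D₀, hface, (rfl | rfl)⟩ := face_of_joinCone hw (hconv D (hsub hD)) hF
        · exact Or.inr ⟨D₀, Φ'.faces_mem D hD D₀ hface, rfl⟩
        · exact Or.inl ⟨D₀, Φ.faces_mem D (hsub hD) D₀ hface, rfl⟩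
    · rintro C (⟨C₀, hC₀, rfl⟩ | ⟨D, hD, rfl⟩) C' (⟨C₁, hC₁, rfl⟩ | ⟨D', hD', rfl⟩)
      · rw [embCone_inter]
        obtain ⟨h1, h2⟩ := Φ.inter_face C₀ hC₀ C₁ hC₁
        exact ⟨embCone_face h1, embCone_face h2⟩
      · rw [embCone_inter_joinCone hw]
        obtain ⟨h1, h2⟩ := Φ.inter_face C₀ hC₀ D' (hsub hD')
        exact ⟨embCone_face h1, embCone_face_joinCone hw (hconv D' (hsub hD')) h2⟩
      · rw [Set.inter_comm, embCone_inter_joinCone hw]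
        obtain ⟨h1, h2⟩ := Φ.inter_face C₁ hC₁ D (hsub hD)
        exact ⟨embCone_face_joinCone hw (hconv D (hsub hD)) h2, embCone_face h1⟩
      · rw [joinCone_inter hw]
        obtain ⟨h1, h2⟩ := Φ.inter_face D (hsub hD) D' (hsub hD')
        exact ⟨joinCone_face hw (hconv D (hsub hD)) h1,
          joinCone_face hw (hconv D' (hsub hD')) h2⟩
  · -- dimension statement
    set S : Set ℕ := coneDim '' Φ'.cones with hS
    have hSfin : S.Finite := Φ'.finite.image _
    have hSne : S.Nonempty := hne.image _
    have hmem : Fan.dim Φ' ∈ S := hSne.csSup_mem hSfin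
    obtain ⟨Dmax, hDmax, hDdim⟩ := hmem
    set T : Set ℕ := coneDim '' ((joinCone w '' Φ'.cones) ∪ (embCone '' Φ'.cones)) with hT
    have hTfin : T.Finite := ((Φ'.finite.image _).union (Φ'.finite.image _)).image _
    have hub : ∀ m ∈ T, m ≤ Fan.dim Φ' + 1 := by
      rintro m ⟨X, (⟨D, hD, rfl⟩ | ⟨D, hD, rfl⟩), rfl⟩
      · rw [coneDim_joinCone hw (hzero D (hsub hD))]
        have : coneDim D ≤ Fan.dim Φ' := le_csSup hSfin.bddAbove ⟨D, hD, rfl⟩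
        omega
      · rw [coneDim_embCone]
        have : coneDim D ≤ Fan.dim Φ' := le_csSup hSfin.bddAbove ⟨D, hD, rfl⟩
        omega
    have hmemT : Fan.dim Φ' + 1 ∈ T := by
      refine ⟨joinCone w Dmax, Or.inl ⟨Dmax, hDmax, rfl⟩, ?_⟩
      rw [coneDim_joinCone hw (hzero Dmax (hsub hDmax)), hDdim]
    exact le_antisymm (csSup_le ⟨_, hmemT⟩ hub) (le_csSup hTfin.bddAbove hmemT)
end
end
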